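/- arXiv:2506.19147 — 8 statements merged into one kernel-verified Lean document; each statement's English description precedes it below -/
import Mathlib

section
/- For each infinite binary branch η, define X_η = {(ν,ξ) : η <_lex ν <_lex ξ and η ∧ ν ◁ ν ∧ ξ}, Y_η = {(ν,ξ) : η <_lex ν and (η ∧ ν ◁ ν ∧ ξ or ξ ≤_lex ν)}, and Z_η = {(ν,ξ) : ξ ≤_lex ν}. Then X_η = Y_η \ Z_η, and both Y_η and Z_η are downright closed with respect to the lexicographic order (i.e., closed under increasing the first coordinate and decreasing the second coordinate). -/
/-!
In the lexicographic order, a branch lying between `x ≤ z` agrees with both wherever `x` and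
`z` agree, so for `x ≤ y ≤ z` the meet length `meetLen x z` is at most `meetLen x y` and
`meetLen y z` (for distinct pairs: `meetLen x x = 0`). Since `meet x y` consists of the first `meetLen x y` values of `y` as well as of
`x`, the condition `η ∧ ν ◁ ν ∧ ξ` says `meetLen η ν < meetLen ν ξ`. Moving `ν` up and `ξ` down
(while `ν < ξ`) can only lower the left side and raise the right side, so `Y_η` is downright
closed; `X_η = Y_η \ Z_η` is totality of the lexicographic order.
-/

/-- Strict lexicographic order on infinite binary sequences: at the first
position where they differ, `η` has the smaller value (`false < true`). -/
def lexLt (η ν : ℕ → Bool) : Prop :=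
  ∃ n, (∀ m < n, η m = ν m) ∧ η n < ν n

/-- Non-strict lexicographic order on infinite binary sequences. -/
def lexLe (η ν : ℕ → Bool) : Prop :=
  η = ν ∨ lexLt η ν

/-- The length of the longest common initial segment of two binary sequences. -/
noncomputable def meetLen (η ν : ℕ → Bool) : ℕ := sInf {n | η n ≠ ν n}

/-- The meet of two (distinct) infinite binary sequences: their longest common
finite initial segment. -/
noncomputable def meet (η ν : ℕ → Bool) : List Bool :=
  (List.range (meetLen η ν)).map η

/-- `σ` is a proper initial segment of `τ`. -/
def ProperPrefix (σ τ : List Bool) : Prop := σ <+: τ ∧ σ ≠ τ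

/-- Downright closed subsets of pairs of branches, with respect to the
lexicographic order: closed under increasing the first coordinate and
decreasing the second coordinate. -/
def DownrightClosedLex (S : Set ((ℕ → Bool) × (ℕ → Bool))) : Prop :=
  ∀ p ∈ S, ∀ q : (ℕ → Bool) × (ℕ → Bool), lexLe p.1 q.1 → lexLe q.2 p.2 → q ∈ S

section Lex

variable {x y z : ℕ → Bool}

lemma lexLt_iff_toLex_lt : lexLt x y ↔ toLex x < toLex y := Iff.rfl

lemma lexLe_iff_toLex_le : lexLe x y ↔ toLex x ≤ toLex y := by
  rw [le_iff_eq_or_lt, toLex_inj]; rfl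

lemma lexLe_trans (hxy : lexLe x y) (hyz : lexLe y z) : lexLe x z :=
  lexLe_iff_toLex_le.2 ((lexLe_iff_toLex_le.1 hxy).trans (lexLe_iff_toLex_le.1 hyz))

lemma not_lexLe_iff_lexLt : ¬ lexLe x y ↔ lexLt y x := by
  rw [lexLe_iff_toLex_le, not_le]; rfl

lemma lexLt_of_lexLt_of_lexLe (hxy : lexLt x y) (hyz : lexLe y z) : lexLt x z :=
  lt_of_lt_of_le (α := Lex (ℕ → Bool)) hxy (lexLe_iff_toLex_le.1 hyz)

lemma lexLe_of_lexLt (h : lexLt x y) : lexLe x y := Or.inr h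

lemma ne_of_lexLt (h : lexLt x y) : x ≠ y := by
  rintro rfl
  exact lt_irrefl _ (lexLt_iff_toLex_lt.1 h)

lemma agree_of_lexLe_of_lexLe {N : ℕ} (hxy : lexLe x y) (hyz : lexLe y z)
    (hxz : ∀ m < N, x m = z m) : ∀ m < N, x m = y m := by
  rcases hxy with rfl | ⟨n, hagree, hlt⟩
  · exact fun _ _ => rfl
  by_cases hnN : N ≤ n
  · exact fun m hm => hagree m (hm.trans_le hnN)
  have hzy : lexLt z y :=
    ⟨n, fun m hm => (hxz m (hm.trans (not_le.1 hnN))).symm.trans (hagree m hm),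
      hxz n (not_le.1 hnN) ▸ hlt⟩
  exact absurd hyz (not_lexLe_iff_lexLt.2 hzy)

end Lex

section Meet

variable {x y z : ℕ → Bool}

lemma agree_of_lt_meetLen {m : ℕ} (hm : m < meetLen x y) : x m = y m :=
  not_not.1 (Nat.notMem_of_lt_sInf hm)

lemma le_meetLen_iff (hxy : x ≠ y) {N : ℕ} : N ≤ meetLen x y ↔ ∀ m < N, x m = y m := by
  refine ⟨fun hN m hm => agree_of_lt_meetLen (hm.trans_le hN), fun hagree => ?_⟩
  have hne : {n | x n ≠ y n}.Nonempty := Function.ne_iff.1 hxy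
  exact le_csInf hne fun n hn => not_lt.1 fun hnN => hn (hagree n hnN)

lemma meetLen_le_meetLen_left (hxy : lexLt x y) (hyz : lexLe y z) :
    meetLen x z ≤ meetLen x y :=
  (le_meetLen_iff (ne_of_lexLt hxy)).2 <|
    agree_of_lexLe_of_lexLe (lexLe_of_lexLt hxy) hyz fun _ => agree_of_lt_meetLen

lemma meetLen_le_meetLen_right (hxy : lexLe x y) (hyz : lexLt y z) :
    meetLen x z ≤ meetLen y z :=
  (le_meetLen_iff (ne_of_lexLt hyz)).2 fun m hm =>
    (agree_of_lexLe_of_lexLe hxy (lexLe_of_lexLt hyz) (fun _ => agree_of_lt_meetLen) m hm).symm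
      |>.trans (agree_of_lt_meetLen hm)

lemma meet_eq_map_range_right : meet x y = (List.range (meetLen x y)).map y :=
  List.map_congr_left fun _ hm => agree_of_lt_meetLen (List.mem_range.1 hm)

lemma properPrefix_map_range_iff (f : ℕ → Bool) {a b : ℕ} :
    ProperPrefix ((List.range a).map f) ((List.range b).map f) ↔ a < b := by
  refine ⟨fun ⟨hpre, hne⟩ => ?_, fun hab => ⟨?_, fun h => hab.ne ?_⟩⟩
  · have := hpre.length_le
    simp only [List.length_map, List.length_range] at this
    exact this.lt_of_ne fun h => hne (h ▸ rfl)
  · rw [List.prefix_iff_eq_take, List.length_map, List.length_range, ← List.map_take,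
      List.take_range, min_eq_left hab.le]
  · simpa using congrArg List.length h

lemma properPrefix_meet_meet_iff :
    ProperPrefix (meet x y) (meet y z) ↔ meetLen x y < meetLen y z := by
  rw [meet_eq_map_range_right, meet, properPrefix_map_range_iff]

end Meet

lemma downrightClosedLex_lexLe_swap : DownrightClosedLex {p | lexLe p.2 p.1} :=
  fun _ hp _ hν hξ => lexLe_trans (lexLe_trans hξ hp) hν

lemma downrightClosedLex_meetLen_lt_or_lexLe (η : ℕ → Bool) :
    DownrightClosedLex
      {p | lexLt η p.1 ∧ (meetLen η p.1 < meetLen p.1 p.2 ∨ lexLe p.2 p.1)} := by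
  rintro ⟨ν, ξ⟩ ⟨hην, hY⟩ ⟨ν', ξ'⟩ hν hξ
  have hην' := lexLt_of_lexLt_of_lexLe hην hν
  refine ⟨hην', ?_⟩
  rcases hY with hlen | hξν
  · by_cases hξ'ν' : lexLe ξ' ν'
    · exact Or.inr hξ'ν'
    have hν'ξ' := not_lexLe_iff_lexLt.1 hξ'ν'
    have hν'ξ := lexLt_of_lexLt_of_lexLe hν'ξ' hξ
    left
    calc meetLen η ν' ≤ meetLen η ν := meetLen_le_meetLen_left hην hν
      _ < meetLen ν ξ := hlen
      _ ≤ meetLen ν' ξ := meetLen_le_meetLen_right hν hν'ξ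
      _ ≤ meetLen ν' ξ' := meetLen_le_meetLen_left hν'ξ' hξ
  · exact Or.inr (lexLe_trans (lexLe_trans hξ hξν) hν)

/-- For a branch `η`, with
`X_η = {(ν,ξ) : η <_lex ν <_lex ξ ∧ η ∧ ν ◁ ν ∧ ξ}`,
`Y_η = {(ν,ξ) : η <_lex ν ∧ (η ∧ ν ◁ ν ∧ ξ ∨ ξ ≤_lex ν)}`, and
`Z_η = {(ν,ξ) : ξ ≤_lex ν}`, we have `X_η = Y_η \ Z_η` and both `Y_η` and
`Z_η` are downright closed. -/
theorem X_eq_Y_diff_Z_and_downrightClosed (η : ℕ → Bool) :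
    ({p | lexLt η p.1 ∧ lexLt p.1 p.2 ∧ ProperPrefix (meet η p.1) (meet p.1 p.2)} :
        Set ((ℕ → Bool) × (ℕ → Bool))) =
      {p | lexLt η p.1 ∧ (ProperPrefix (meet η p.1) (meet p.1 p.2) ∨ lexLe p.2 p.1)} \
        {p | lexLe p.2 p.1} ∧
    DownrightClosedLex
      {p | lexLt η p.1 ∧ (ProperPrefix (meet η p.1) (meet p.1 p.2) ∨ lexLe p.2 p.1)} ∧
    DownrightClosedLex {p | lexLe p.2 p.1} := by
  refine ⟨?_, ?_, downrightClosedLex_lexLe_swap⟩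
  · ext ⟨ν, ξ⟩
    simp only [Set.mem_ofPred_eq, Set.mem_sdiff, not_lexLe_iff_lexLt]
    constructor
    · rintro ⟨hην, hνξ, hpre⟩
      exact ⟨⟨hην, Or.inl hpre⟩, hνξ⟩
    · rintro ⟨⟨hην, hY⟩, hνξ⟩
      exact ⟨hην, hνξ, hY.resolve_right (not_lexLe_iff_lexLt.2 hνξ)⟩
  · simpa only [properPrefix_meet_meet_iff] using downrightClosedLex_meetLen_lt_or_lexLe η
end

section
/- Let L be a linear order and K its Dedekind completion such that L embeds into K with the property that K is not dense below any point of (the image of) L (i.e., each element of L has an immediate predecessor in K). For a downright closed set X ⊆ L × L define f_X : K → K by f_X(i) = sup{j ∈ L : ∃ ℓ ∈ L, ℓ ≤ i and (ℓ,j) ∈ X}. Then f_X is non-decreasing, and for all (i,j) ∈ L × L: j ≤ f_X(i) if and only if (i,j) ∈ X. -/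
/-- A set `X ⊆ L × L` is downright closed if membership is preserved under
increasing the first coordinate and decreasing the second coordinate. -/
def DownrightClosed {L : Type*} [LinearOrder L] (X : Set (L × L)) : Prop :=
  ∀ p ∈ X, ∀ q : L × L, p.1 ≤ q.1 → q.2 ≤ p.2 → q ∈ X

/-- Let `L` be a linear order embedded in a complete linear order `K` so that
every point of (the image of) `L` has an immediate predecessor in `K`.  For a
downright closed set `X ⊆ L × L`, the function
`f_X(i) = sup {e j : ∃ ℓ ∈ L, e ℓ ≤ i ∧ (ℓ,j) ∈ X}` is non-decreasing and for
all `(i,j) ∈ L × L` we have `e j ≤ f_X (e i) ↔ (i,j) ∈ X`. -/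
theorem downright_sup_characterization {L K : Type*} [LinearOrder L]
    [CompleteLinearOrder K] (e : L ↪o K)
    (hpred : ∀ i : L, ∃ p : K, p < e i ∧ ∀ q : K, q < e i → q ≤ p)
    (X : Set (L × L)) (hX : DownrightClosed X) :
    Monotone (fun i : K =>
      sSup {y : K | ∃ j l : L, y = e j ∧ e l ≤ i ∧ (l, j) ∈ X}) ∧
    ∀ i j : L,
      (e j ≤ sSup {y : K | ∃ j' l : L, y = e j' ∧ e l ≤ e i ∧ (l, j') ∈ X}) ↔
        (i, j) ∈ X := by
  constructor
  · intro a b hab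
    apply sSup_le_sSup
    rintro y ⟨j, l, rfl, hl, hjl⟩
    exact ⟨j, l, rfl, hl.trans hab, hjl⟩
  · intro i j
    constructor
    · intro hle
      by_contra hnot
      obtain ⟨p, hp, hmax⟩ := hpred j
      have : sSup {y : K | ∃ j' l : L, y = e j' ∧ e l ≤ e i ∧ (l, j') ∈ X} ≤ p := by
        apply sSup_le
        rintro y ⟨j', l, rfl, hl, hjl⟩
        apply hmax
        apply e.strictMono
        by_contra hge
        push_neg at hge
        exact hnot (hX (l, j') hjl (i, j) (e.le_iff_le.mp hl) hge)
      exact absurd (hle.trans this) (not_le.mpr hp)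
    · intro h
      exact le_sSup ⟨j, i, rfl, le_refl _, h⟩
end

section
/- If a k-partitioned type tp(a_0; ...; a_{k-1}/B) k-splits over C, then the (k−1)-partitioned type tp(a_0; ...; a_{k-2}/B ∪ {a_{k-1}}) (k−1)-splits over C ∪ {a_{k-1}}. -/
open FirstOrder

/-- Two `γ`-tuples have the same complete first-order type over the parameter
set `B`: they satisfy the same formulas with parameters from `B`. -/
def SameTypeOver (L : FirstOrder.Language) {M : Type*} [L.Structure M] {γ : Type*}
    (B : Set M) (a a' : γ → M) : Prop :=
  ∀ (n : ℕ) (b : Fin n → M), (∀ i, b i ∈ B) →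
    ∀ φ : L.Formula (γ ⊕ Fin n), φ.Realize (Sum.elim a b) ↔ φ.Realize (Sum.elim a' b)

/-- The `k`-partitioned type `tp(a_0; …; a_{k-1} / B)` (with each part an
`m`-tuple) `k`-splits over `C ⊆ B`: there are a formula `φ(x̄_0,…,x̄_{k-1}, ȳ)`
and tuples `b, b'` from `B` such that for each `i < k`, `b` and `b'` have the
same type over `C` together with the parts `a_j` for `j ≠ i`, yet `φ(ā, b)`
holds and `φ(ā, b')` fails. -/
def KSplitsT (L : FirstOrder.Language) {M : Type*} [L.Structure M] (k m : ℕ)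
    (a : Fin k → Fin m → M) (B C : Set M) : Prop :=
  ∃ (n : ℕ) (φ : L.Formula ((Fin k × Fin m) ⊕ Fin n)) (b b' : Fin n → M),
    (∀ i, b i ∈ B) ∧ (∀ i, b' i ∈ B) ∧
    (∀ i : Fin k,
      SameTypeOver L (C ∪ ⋃ j ∈ ({j | j ≠ i} : Set (Fin k)), Set.range (a j)) b b') ∧
    φ.Realize (Sum.elim (fun p : Fin k × Fin m => a p.1 p.2) b) ∧
    ¬ φ.Realize (Sum.elim (fun p : Fin k × Fin m => a p.1 p.2) b')

/-- If `tp(a_0; …; a_{k-1}; a_k / B)` `(k+1)`-splits over `C`, then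
`tp(a_0; …; a_{k-1} / B ∪ {a_k})` `k`-splits over `C ∪ {a_k}`. -/
theorem kSplits_down (L : FirstOrder.Language) {M : Type*} [L.Structure M]
    (k m : ℕ) (a : Fin (k + 1) → Fin m → M) (B C : Set M) (hCB : C ⊆ B)
    (h : KSplitsT L (k + 1) m a B C) :
    KSplitsT L k m (fun i => a i.castSucc)
      (B ∪ Set.range (a (Fin.last k))) (C ∪ Set.range (a (Fin.last k))) := by
  obtain ⟨n, φ, b, b', hb, hb', hsame, hpos, hneg⟩ := h
  -- relabeling map: the last block of variables becomes parameters
  let g : (Fin (k + 1) × Fin m) ⊕ Fin n → (Fin k × Fin m) ⊕ Fin (n + m) :=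
    fun x => match x with
      | Sum.inl (i, j) =>
        if h : (i : ℕ) < k then Sum.inl (⟨i, h⟩, j)
        else Sum.inr (finSumFinEquiv (Sum.inr j))
      | Sum.inr t => Sum.inr (finSumFinEquiv (Sum.inl t))
  let f : Fin (n + m) → M := fun t => Sum.elim b (a (Fin.last k)) (finSumFinEquiv.symm t)
  let f' : Fin (n + m) → M := fun t => Sum.elim b' (a (Fin.last k)) (finSumFinEquiv.symm t)
  refine ⟨n + m, φ.relabel g, f, f', ?_, ?_, ?_, ?_, ?_⟩
  · intro t
    obtain ⟨u, rfl⟩ := finSumFinEquiv.surjective t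
    cases u with
    | inl s => exact Or.inl (by simpa [f] using hb s)
    | inr j => exact Or.inr ⟨j, by simp [f]⟩
  · intro t
    obtain ⟨u, rfl⟩ := finSumFinEquiv.surjective t
    cases u with
    | inl s => exact Or.inl (by simpa [f'] using hb' s)
    | inr j => exact Or.inr ⟨j, by simp [f']⟩
  · intro i n₀ p hp ψ
    have hi := hsame i.castSucc
    -- the big set for i.castSucc contains everything
    have hlast : Set.range (a (Fin.last k)) ⊆
        C ∪ ⋃ j ∈ ({j | j ≠ i.castSucc} : Set (Fin (k + 1))), Set.range (a j) := by
      intro x hx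
      refine Or.inr ?_
      refine Set.mem_biUnion (show (Fin.last k) ∈ {j | j ≠ i.castSucc} from ?_) hx
      simp only [Set.mem_setOf_eq]
      exact (Fin.castSucc_lt_last i).ne'
    have hpS : ∀ x, x ∈ ((C ∪ Set.range (a (Fin.last k))) ∪
        ⋃ j ∈ ({j | j ≠ i} : Set (Fin k)), Set.range ((fun i => a i.castSucc) j)) →
        x ∈ C ∪ ⋃ j ∈ ({j | j ≠ i.castSucc} : Set (Fin (k + 1))), Set.range (a j) := by
      intro x hx
      rcases hx with (hx | hx) | hx
      · exact Or.inl hx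
      · exact hlast hx
      · obtain ⟨j, hj, hx⟩ := Set.mem_iUnion₂.mp hx
        refine Or.inr (Set.mem_biUnion (show j.castSucc ∈ {j | j ≠ i.castSucc} from ?_) hx)
        simpa using fun hji => hj (Fin.castSucc_injective _ hji)
    -- build new parameters and relabeled formula
    let q : Fin (m + n₀) → M := fun t => Sum.elim (a (Fin.last k)) p (finSumFinEquiv.symm t)
    have hq : ∀ t, q t ∈ C ∪ ⋃ j ∈ ({j | j ≠ i.castSucc} : Set (Fin (k + 1))), Set.range (a j) := by
      intro t
      obtain ⟨u, rfl⟩ := finSumFinEquiv.surjective t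
      cases u with
      | inl j => exact hlast ⟨j, by simp [q]⟩
      | inr s => exact hpS _ (by simpa [q] using hp s)
    let g₂ : Fin (n + m) ⊕ Fin n₀ → Fin n ⊕ Fin (m + n₀) :=
      fun x => match x with
        | Sum.inl t => match finSumFinEquiv.symm t with
          | Sum.inl s => Sum.inl s
          | Sum.inr j => Sum.inr (finSumFinEquiv (Sum.inl j))
        | Sum.inr s => Sum.inr (finSumFinEquiv (Sum.inr s))
    have key := hi (m + n₀) q hq (ψ.relabel g₂)
    have hcomp : ∀ c : Fin n → M,
        Sum.elim c q ∘ g₂ =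
          Sum.elim (fun t : Fin (n + m) => Sum.elim c (a (Fin.last k)) (finSumFinEquiv.symm t)) p := by
      intro c
      funext x
      cases x with
      | inl t =>
        obtain ⟨u, rfl⟩ := finSumFinEquiv.surjective t
        cases u with
        | inl s => simp [g₂, q]
        | inr j => simp [g₂, q]
      | inr s => simp [g₂, q]
    rw [Language.Formula.realize_relabel, Language.Formula.realize_relabel, hcomp b, hcomp b'] at key
    exact key
  · rw [Language.Formula.realize_relabel]
    convert hpos using 2
    funext x
    cases x with
    | inl p =>
      obtain ⟨i, j⟩ := p
      by_cases hik : (i : ℕ) < k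
      · simp only [g, Function.comp_apply, dif_pos hik, Sum.elim_inl]
        congr 1
      · have : i = Fin.last k := Fin.ext (Nat.le_antisymm (Nat.lt_succ_iff.mp i.isLt)
          (Nat.le_of_not_lt hik))
        subst this
        simp [g, f, hik]
    | inr t => simp [g, f]
  · rw [Language.Formula.realize_relabel]
    convert hneg using 3
    funext x
    cases x with
    | inl p =>
      obtain ⟨i, j⟩ := p
      by_cases hik : (i : ℕ) < k
      · simp only [g, Function.comp_apply, dif_pos hik, Sum.elim_inl]
        congr 1
      · have : i = Fin.last k := Fin.ext (Nat.le_antisymm (Nat.lt_succ_iff.mp i.isLt)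
          (Nat.le_of_not_lt hik))
        subst this
        simp [g, f', hik]
    | inr t => simp [g, f']
end

section
/- If a complete theory T has λ-bounded k-splitting, then T has λ-bounded (k+1)-splitting. That is: if for every k-partitioned type over any parameter set B there exists C ⊆ B with |C| < λ over which the type does not k-split, then the same holds with k replaced by k+1. -/
open FirstOrder Cardinal

universe u v w

/-- `λ`-bounded `k`-splitting: for every `k`-partitioned type over any
parameter set `B` there is `C ⊆ B` with `|C| < λ` over which the type does not
`k`-split. -/
def BoundedKSplitting (L : FirstOrder.Language) (M : Type u) [L.Structure M]
    (k : ℕ) (lam : Cardinal.{u}) : Prop :=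
  ∀ (m : ℕ) (a : Fin k → Fin m → M) (B : Set M),
    ∃ C : Set M, C ⊆ B ∧ #C < lam ∧ ¬ KSplitsT L k m a B C

/-- `SameTypeOver` is antitone in the parameter set. -/
lemma sameTypeOver_mono (L : FirstOrder.Language) {M : Type*} [L.Structure M] {γ : Type*}
    {S S' : Set M} (hss : S ⊆ S') {a a' : γ → M} (hst : SameTypeOver L S' a a') :
    SameTypeOver L S a a' :=
  fun n b hb φ => hst n b (fun i => hss (hb i)) φ

/-- If a theory has `λ`-bounded `k`-splitting, then it has `λ`-bounded
`(k+1)`-splitting. -/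
theorem boundedKSplitting_succ (L : FirstOrder.Language) (M : Type u)
    [L.Structure M] (k : ℕ) (lam : Cardinal.{u})
    (h : BoundedKSplitting L M k lam) :
    BoundedKSplitting L M (k + 1) lam := by
  classical
  cases k with
  | zero =>
    -- From bounded 0-splitting, every parameter set B admits a small C over which
    -- any two equal-length tuples from B satisfy the same parameter-free formulas;
    -- this forces the witnesses b, b' of any 1-splitting to be equal.
    intro m a B
    obtain ⟨C, hCB, hClt, hns⟩ := h 0 (fun i _ => i.elim0) B
    refine ⟨C, hCB, hClt, ?_⟩
    rintro ⟨n, φ, b, b', hb, hb', _, hT, hF⟩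
    have hbb : b = b' := by
      funext i
      by_contra hne
      apply hns
      refine ⟨n + n,
        Language.Term.equal (Language.Term.var (Sum.inr (Fin.castAdd n i)))
          (Language.Term.var (Sum.inr (Fin.natAdd n i))),
        Fin.append b' b', Fin.append b b', ?_, ?_, fun j => j.elim0, ?_, ?_⟩
      · intro j
        refine Fin.addCases (fun j1 => ?_) (fun j2 => ?_) j
        · rw [Fin.append_left]; exact hb' j1
        · rw [Fin.append_right]; exact hb' j2
      · intro j
        refine Fin.addCases (fun j1 => ?_) (fun j2 => ?_) j
        · rw [Fin.append_left]; exact hb j1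
        · rw [Fin.append_right]; exact hb' j2
      · simp only [Language.Formula.realize_equal, Language.Term.realize_var, Sum.elim_inr,
          Fin.append_left, Fin.append_right]
      · simp only [Language.Formula.realize_equal, Language.Term.realize_var, Sum.elim_inr,
          Fin.append_left, Fin.append_right]
        exact hne
    exact hF (hbb ▸ hT)
  | succ k' =>
    intro m a B
    -- merge the last two parts into a single part of length `m + m`
    have hg : ∀ p : Fin (k' + 1) × Fin (m + m), p.2.val % m < m :=
      fun p => Nat.mod_lt _ (by have := p.2.isLt; omega)
    let g : Fin (k' + 1) × Fin (m + m) → Fin (k' + 2) × Fin m := fun p =>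
      if hi : (p.1 : ℕ) < k' then (⟨p.1, by omega⟩, ⟨p.2 % m, hg p⟩)
      else if hj : (p.2 : ℕ) < m then (⟨k', by omega⟩, ⟨p.2, hj⟩)
      else (⟨k' + 1, by omega⟩, ⟨p.2 - m, by have := p.2.isLt; omega⟩)
    let f : Fin (k' + 2) × Fin m → Fin (k' + 1) × Fin (m + m) := fun p =>
      if hi : (p.1 : ℕ) < k' then (⟨p.1, by omega⟩, ⟨p.2, by have := p.2.isLt; omega⟩)
      else if hi2 : (p.1 : ℕ) = k' then (⟨k', by omega⟩, ⟨p.2, by have := p.2.isLt; omega⟩)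
      else (⟨k', by omega⟩, ⟨m + p.2, by have := p.2.isLt; omega⟩)
    have hgf : ∀ p, g (f p) = p := by
      rintro ⟨i, j⟩
      have hi := i.isLt
      have hj := j.isLt
      have hm := Nat.mod_eq_of_lt hj
      simp only [f, g]
      split_ifs <;> refine Prod.ext (Fin.ext ?_) (Fin.ext ?_) <;> (try simp_all) <;> (try dsimp only at *) <;> omega
    let A' : Fin (k' + 1) → Fin (m + m) → M := fun i j => a (g (i, j)).1 (g (i, j)).2
    obtain ⟨C, hCB, hClt, hns⟩ := h (m + m) A' B
    refine ⟨C, hCB, hClt, ?_⟩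
    rintro ⟨n, φ, b, b', hb, hb', hsame, hT, hF⟩
    apply hns
    -- embedding of the index of the merged partition into the original one,
    -- avoiding the merged last part
    let e : Fin (k' + 1) → Fin (k' + 2) := fun i =>
      if (i : ℕ) < k' then ⟨i, by omega⟩ else ⟨k' + 1, by omega⟩
    have key : ∀ (i' : Fin (k' + 1)) (j' : Fin (k' + 1)) (j : Fin (m + m)),
        j' ≠ i' → (g (j', j)).1 ≠ e i' := by
      intro i' j' j hne
      have hne' : (j' : ℕ) ≠ (i' : ℕ) := fun hc => hne (Fin.ext hc)
      simp only [g, e]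
      split_ifs <;> (intro hc; rw [Fin.ext_iff] at hc; simp_all <;> omega)
    have hincl : ∀ i' : Fin (k' + 1),
        (C ∪ ⋃ j' ∈ ({j' | j' ≠ i'} : Set (Fin (k' + 1))), Set.range (A' j')) ⊆
          (C ∪ ⋃ j ∈ ({j | j ≠ e i'} : Set (Fin (k' + 2))), Set.range (a j)) := by
      intro i' x hx
      rcases hx with hx | hx
      · exact Or.inl hx
      · simp only [Set.mem_iUnion, Set.mem_range] at hx
        obtain ⟨j', hj', j, rfl⟩ := hx
        right
        simp only [Set.mem_iUnion, Set.mem_range]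
        exact ⟨(g (j', j)).1, key i' j' j hj', (g (j', j)).2, rfl⟩
    have hA' : (fun p : Fin (k' + 1) × Fin (m + m) => A' p.1 p.2) ∘ f =
        fun p : Fin (k' + 2) × Fin m => a p.1 p.2 := by
      funext p
      simp only [Function.comp_apply, A']
      rw [show ((f p).1, (f p).2) = f p from rfl, hgf]
    refine ⟨n, φ.relabel (Sum.map f id), b, b', hb, hb', ?_, ?_, ?_⟩
    · intro i'
      exact sameTypeOver_mono L (hincl i') (hsame (e i'))
    · rw [Language.Formula.realize_relabel]
      have : (Sum.elim (fun p : Fin (k' + 1) × Fin (m + m) => A' p.1 p.2) b) ∘ Sum.map f id =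
          Sum.elim (fun p : Fin (k' + 2) × Fin m => a p.1 p.2) b := by
        funext x
        cases x with
        | inl p => simpa using congrFun hA' p
        | inr j => rfl
      rw [this]; exact hT
    · rw [Language.Formula.realize_relabel]
      have : (Sum.elim (fun p : Fin (k' + 1) × Fin (m + m) => A' p.1 p.2) b') ∘ Sum.map f id =
          Sum.elim (fun p : Fin (k' + 2) × Fin m => a p.1 p.2) b' := by
        funext x
        cases x with
        | inl p => simpa using congrFun hA' p
        | inr j => rfl
      rw [this]; exact hF
end

section
/- If T is a k-ary theory (every formula is equivalent modulo T to a Boolean combination of formulas in at most k free variables), then T has 1-bounded k-splitting: no k-partitioned type tp(a_0; ...; a_{k-1}/B) k-splits over the empty set. Equivalently, for any such type and any tuple b̄ ∈ B, the complete type of (b̄, a_0, ..., a_{k-1}) is determined by tp(a_0,...,a_{k-1}) together with the types tp(b̄, a_0,...,â_i,...,a_{k-1}) for i < k (omitting each a_i in turn). -/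
open FirstOrder

/-- The Boolean combinations of a family `S` of subsets of `α`. -/
inductive BoolComb {α : Type*} (S : Set (Set α)) : Set α → Prop
  | basic {s : Set α} : s ∈ S → BoolComb S s
  | univ : BoolComb S Set.univ
  | compl {s : Set α} : BoolComb S s → BoolComb S sᶜ
  | inter {s t : Set α} : BoolComb S s → BoolComb S t → BoolComb S (s ∩ t)

/-- The structure `M` is `k`-ary: every formula is equivalent (in `M`) to a
Boolean combination of formulas each having at most `k` free variables. -/
def IsKAry (L : FirstOrder.Language) (M : Type*) [L.Structure M] (k : ℕ) : Prop :=
  ∀ (n : ℕ) (φ : L.Formula (Fin n)),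
    BoolComb
      {s : Set (Fin n → M) | ∃ (ψ : L.Formula (Fin k)) (g : Fin k → Fin n),
        s = {v | ψ.Realize (v ∘ g)}}
      {v | φ.Realize v}

/-- If `T` is `k`-ary, then it has `1`-bounded `k`-splitting: no `k`-partitioned
type `k`-splits over the empty set. -/
theorem not_kSplits_of_kAry (L : FirstOrder.Language) (M : Type*) [L.Structure M]
    (k : ℕ) (hkary : IsKAry L M k) :
    ∀ (m : ℕ) (a : Fin k → Fin m → M) (B : Set M), ¬ KSplitsT L k m a B ∅ := by
  intro m a B hsplit
  obtain ⟨n, φ, b, b', hb, hb', hsame, hre, hnre⟩ := hsplit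
  set aa : Fin k × Fin m → M := fun p => a p.1 p.2 with h_aa
  let e : ((Fin k × Fin m) ⊕ Fin n) ≃ Fin (k * m + n) :=
    (Equiv.sumCongr finProdFinEquiv (Equiv.refl _)).trans finSumFinEquiv
  let φ' : L.Formula (Fin (k * m + n)) := φ.relabel e
  have key := hkary (k * m + n) φ'
  set w : Fin (k * m + n) → M := (Sum.elim aa b) ∘ e.symm with hw
  set w' : Fin (k * m + n) → M := (Sum.elim aa b') ∘ e.symm with hw'
  have main : ∀ s, BoolComb
      {s : Set (Fin (k*m+n) → M) | ∃ (ψ : L.Formula (Fin k)) (g : Fin k → Fin (k*m+n)),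
        s = {v | ψ.Realize (v ∘ g)}} s → (w ∈ s ↔ w' ∈ s) := by
    intro s hs
    induction hs with
    | univ => simp
    | compl _ ih => simpa using not_congr ih
    | inter _ _ ih1 ih2 =>
        simp only [Set.mem_inter_iff]
        exact and_congr ih1 ih2
    | @basic s hmem =>
        obtain ⟨ψ, g, rfl⟩ := hmem
        simp only [Set.mem_setOf_eq]
        set h : Fin k → (Fin k × Fin m) ⊕ Fin n := fun t => e.symm (g t) with hh
        have hwg : ∀ t, w (g t) = Sum.elim aa b (h t) := fun t => rfl
        have hwg' : ∀ t, w' (g t) = Sum.elim aa b' (h t) := fun t => rfl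
        by_cases hcase : ∀ t, ∃ p, h t = Sum.inl p
        · have : w ∘ g = w' ∘ g := by
            funext t
            obtain ⟨p, hp⟩ := hcase t
            show w (g t) = w' (g t)
            rw [hwg t, hwg' t, hp]
            rfl
          rw [this]
        · push_neg at hcase
          obtain ⟨t0, ht0⟩ := hcase
          obtain ⟨r0, hr0⟩ : ∃ r0, h t0 = Sum.inr r0 := by
            rcases hht : h t0 with p | r
            · exact absurd hht (ht0 p)
            · exact ⟨r, rfl⟩
          -- find an index i not used among the a-coordinates
          set F : Fin k → Option (Fin k) :=
            fun t => Sum.elim (fun p => some p.1) (fun _ => none) (h t) with hF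
          obtain ⟨i, hi⟩ : ∃ i : Fin k, ∀ t, F t ≠ some i := by
            by_contra hcon
            push_neg at hcon
            have himg : Finset.univ.image F = (Finset.univ : Finset (Option (Fin k))) := by
              apply Finset.eq_univ_iff_forall.2
              intro x
              rcases x with _ | i
              · refine Finset.mem_image.2 ⟨t0, Finset.mem_univ _, ?_⟩
                simp [hF, hr0]
              · obtain ⟨t, ht⟩ := hcon i
                exact Finset.mem_image.2 ⟨t, Finset.mem_univ _, ht⟩
            have h1 : (Finset.univ.image F).card ≤ k := by
              simpa using Finset.card_image_le (s := Finset.univ) (f := F)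
            rw [himg] at h1
            simp [Finset.card_univ] at h1
          have hi' : ∀ t p, h t = Sum.inl p → p.1 ≠ i := by
            intro t p hp
            have := hi t
            rw [hF] at this
            simp only [hp, Sum.elim_inl] at this
            intro hcontra
            exact this (by rw [hcontra])
          have hmemC : ∀ (j : Fin k), j ≠ i → ∀ (s : Fin m),
              a j s ∈ (∅ ∪ ⋃ j ∈ ({j | j ≠ i} : Set (Fin k)), Set.range (a j) : Set M) := by
            intro j hj s
            refine Set.mem_union_right _ ?_
            exact Set.mem_biUnion hj ⟨s, rfl⟩
          by_cases hex : ∃ t p, h t = Sum.inl p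
          · obtain ⟨t', p', hp'⟩ := hex
            set d : M := a p'.1 p'.2 with hd
            have hdC := hmemC p'.1 (hi' t' p' hp') p'.2
            set c : Fin k → M :=
              fun t => Sum.elim (fun p : Fin k × Fin m => a p.1 p.2) (fun _ => d) (h t) with hc
            have hcC : ∀ t, c t ∈ (∅ ∪ ⋃ j ∈ ({j | j ≠ i} : Set (Fin k)), Set.range (a j) : Set M) := by
              intro t
              rcases hht : h t with p | r
              · simp only [hc, hht, Sum.elim_inl]
                exact hmemC p.1 (hi' t p hht) p.2
              · simp only [hc, hht, Sum.elim_inr]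
                exact hdC
            set ρ : Fin k → Fin n ⊕ Fin k :=
              fun t => Sum.elim (fun _ => Sum.inr t) (fun r => Sum.inl r) (h t) with hρ
            have hχ := hsame i k c hcC (ψ.relabel ρ)
            rw [FirstOrder.Language.Formula.realize_relabel,
                FirstOrder.Language.Formula.realize_relabel] at hχ
            have h1 : Sum.elim b c ∘ ρ = w ∘ g := by
              funext t
              rcases hht : h t with p | r
              · simp only [Function.comp_apply, hρ, hht, Sum.elim_inl, Sum.elim_inr,
                  hc, hwg t, h_aa]
              · simp only [Function.comp_apply, hρ, hht, Sum.elim_inl, Sum.elim_inr, hwg t]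
            have h2 : Sum.elim b' c ∘ ρ = w' ∘ g := by
              funext t
              rcases hht : h t with p | r
              · simp only [Function.comp_apply, hρ, hht, Sum.elim_inl, Sum.elim_inr,
                  hc, hwg' t, h_aa]
              · simp only [Function.comp_apply, hρ, hht, Sum.elim_inl, Sum.elim_inr, hwg' t]
            rw [h1, h2] at hχ
            exact hχ
          · push_neg at hex
            have hinr : ∀ t, ∃ r, h t = Sum.inr r := by
              intro t
              rcases hht : h t with p | r
              · exact absurd hht (hex t p)
              · exact ⟨r, rfl⟩
            set r : Fin k → Fin n := fun t => Sum.elim (fun _ => r0) id (h t) with hr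
            have hrspec : ∀ t, h t = Sum.inr (r t) := by
              intro t
              obtain ⟨s, hs⟩ := hinr t
              simp [hr, hs]
            have hχ := hsame i 0 Fin.elim0 (fun j => j.elim0)
              (ψ.relabel (fun t => (Sum.inl (r t) : Fin n ⊕ Fin 0)))
            rw [FirstOrder.Language.Formula.realize_relabel,
                FirstOrder.Language.Formula.realize_relabel] at hχ
            have h1 : (Sum.elim b Fin.elim0 ∘ fun t => (Sum.inl (r t) : Fin n ⊕ Fin 0))
                = w ∘ g := by
              funext t
              simp only [Function.comp_apply, Sum.elim_inl, hwg t, hrspec t, Sum.elim_inr]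
            have h2 : (Sum.elim b' Fin.elim0 ∘ fun t => (Sum.inl (r t) : Fin n ⊕ Fin 0))
                = w' ∘ g := by
              funext t
              simp only [Function.comp_apply, Sum.elim_inl, hwg' t, hrspec t, Sum.elim_inr]
            rw [h1, h2] at hχ
            exact hχ
  have hkey := main _ key
  have hwφ : w ∈ {v | φ'.Realize v} := by
    show φ'.Realize w
    rw [show φ' = φ.relabel e from rfl, FirstOrder.Language.Formula.realize_relabel]
    have : w ∘ e = Sum.elim aa b := by
      funext x
      simp [hw]
    rw [this]
    exact hre
  have hw'φ : w' ∈ {v | φ'.Realize v} := hkey.1 hwφ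
  apply hnre
  have : φ'.Realize w' := hw'φ
  rw [show φ' = φ.relabel e from rfl, FirstOrder.Language.Formula.realize_relabel] at this
  have heq : w' ∘ e = Sum.elim aa b' := by
    funext x
    simp [hw']
  rwa [heq] at this
end

section
/- End-homogeneous subsequence extraction: For any first-order language L, L-structure M, parameter set B ⊆ M, infinite cardinal λ ≥ |L| + |B|, and sequence (a_i) of elements of M indexed by i < (2^λ)⁺, there exists X ⊆ (2^λ)⁺ with |X| = λ⁺ such that the subsequence (a_i)_{i ∈ X} is end-homogeneous over B: for all i < j in X we have a_i ≡_{B ∪ {a_ℓ : ℓ ∈ X, ℓ < i}} a_j, that is, for any index i ∈ X, all later elements of the subsequence realize the same type as a_i over B together with the earlier elements of the subsequence. -/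
open FirstOrder Cardinal Ordinal

universe u

namespace EndHomAux

open Set

variable {L : FirstOrder.Language.{u, u}} {M : Type u} [L.Structure M]
variable {K ι : Type u}

/-- Interpretation of abstract parameters. -/
def par (B : Set M) (a : K → M) (P : ι → K) : ↥B ⊕ ι → M :=
  Sum.elim Subtype.val (a ∘ P)

/-- The complete type of `a j` over `B` and the parameters `a ∘ P`, encoded as a
set of (formula, abstract parameter tuple) pairs. -/
def typeOf (B : Set M) (a : K → M) (P : ι → K) (j : K) :
    Set (Σ n : ℕ, (Fin n → (↥B ⊕ ι)) × L.Formula (Unit ⊕ Fin n)) :=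
  {x | x.2.2.Realize (Sum.elim (fun _ : Unit => a j) (par B a P ∘ x.2.1))}

theorem typeOf_mono {B : Set M} {a : K → M} {P Q : ι → K}
    (h : Set.range P ⊆ Set.range Q) {i j : K}
    (hQ : typeOf (L := L) B a Q i = typeOf B a Q j) :
    typeOf (L := L) B a P i = typeOf B a P j := by
  have hx : ∀ x : ι, ∃ y : ι, Q y = P x := fun x => h (mem_range_self x)
  choose g hg using hx
  have key : par B a P = par B a Q ∘ Sum.map id g := by
    funext z; cases z with
    | inl b => rfl
    | inr x => simp [par, hg]
  have e : ∀ (k : K) (n : ℕ) (c : Fin n → (↥B ⊕ ι)) (φ : L.Formula (Unit ⊕ Fin n)),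
      (⟨n, c, φ⟩ : Σ n : ℕ, (Fin n → (↥B ⊕ ι)) × L.Formula (Unit ⊕ Fin n)) ∈
        typeOf (L := L) B a P k ↔
      (⟨n, Sum.map id g ∘ c, φ⟩ : Σ n : ℕ, (Fin n → (↥B ⊕ ι)) × L.Formula (Unit ⊕ Fin n)) ∈
        typeOf (L := L) B a Q k := by
    intro k n c φ
    simp only [typeOf, mem_setOf_eq, key]
    rfl
  ext ⟨n, c, φ⟩
  rw [e i n c φ, e j n c φ, hQ]

theorem sameTypeOver_of_typeOf_eq {B C : Set M} {a : K → M} {P : ι → K} {i j : K}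
    (hC : C ⊆ B ∪ a '' Set.range P)
    (h : typeOf (L := L) B a P i = typeOf B a P j) :
    SameTypeOver L C (fun _ : Unit => a i) (fun _ : Unit => a j) := by
  intro n b hb φ
  have hx : ∀ k : Fin n, ∃ c : ↥B ⊕ ι, par B a P c = b k := by
    intro k
    rcases hC (hb k) with hk | ⟨m, ⟨x, -, rfl⟩, hax⟩
    · exact ⟨Sum.inl ⟨b k, hk⟩, rfl⟩
    · exact ⟨Sum.inr x, hax⟩
  choose c hc using hx
  have hb' : b = par B a P ∘ c := funext fun k => (hc k).symm
  have h1 : ∀ k : K, φ.Realize (Sum.elim (fun _ : Unit => a k) b) ↔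
      (⟨n, c, φ⟩ : Σ n : ℕ, (Fin n → (↥B ⊕ ι)) × L.Formula (Unit ⊕ Fin n)) ∈
        typeOf (L := L) B a P k := by
    intro k
    rw [hb']
    rfl
  rw [h1 i, h1 j, h]

theorem mk_typeIndex_le {B : Set M} {lam : Cardinal.{u}} (hlam : ℵ₀ ≤ lam)
    (hL : L.card ≤ lam) (hB : #B ≤ lam) (hι : #ι ≤ lam) :
    #(Σ n : ℕ, (Fin n → (↥B ⊕ ι)) × L.Formula (Unit ⊕ Fin n)) ≤ lam := by
  have hD : #(↥B ⊕ ι) ≤ lam := by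
    rw [mk_sum, Cardinal.lift_id, Cardinal.lift_id]
    exact (add_le_add hB hι).trans (le_of_eq (add_eq_self hlam))
  have hFin : ∀ n : ℕ, #(Fin n → (↥B ⊕ ι)) ≤ lam := by
    intro n
    rw [mk_arrow, Cardinal.lift_uzero, Cardinal.mk_fin, Cardinal.lift_natCast,
      Cardinal.power_natCast]
    exact (pow_le_pow_left₀ (zero_le) hD n).trans (power_nat_le hlam)
  have hφ : ∀ n : ℕ, #(L.Formula (Unit ⊕ Fin n)) ≤ lam := by
    intro n
    have h0 : #(L.Formula (Unit ⊕ Fin n)) ≤ #(Σ m, L.BoundedFormula (Unit ⊕ Fin n) m) :=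
      mk_le_of_injective (f := Sigma.mk 0) sigma_mk_injective
    refine h0.trans (Language.BoundedFormula.card_le.trans ?_)
    rw [Cardinal.lift_uzero]
    refine max_le hlam ((add_le_add ?_ hL).trans (le_of_eq (add_eq_self hlam)))
    calc Cardinal.lift.{u} #(Unit ⊕ Fin n) ≤ Cardinal.lift.{u} ℵ₀ :=
          Cardinal.lift_le.2 mk_le_aleph0
      _ = ℵ₀ := Cardinal.lift_aleph0
      _ ≤ lam := hlam
  calc #(Σ n : ℕ, (Fin n → (↥B ⊕ ι)) × L.Formula (Unit ⊕ Fin n))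
      = Cardinal.sum (fun n : ℕ => #((Fin n → (↥B ⊕ ι)) × L.Formula (Unit ⊕ Fin n))) :=
        mk_sigma _
    _ ≤ Cardinal.sum (fun _ : ℕ => lam) := by
        refine Cardinal.sum_le_sum _ _ fun n => ?_
        rw [mk_prod, Cardinal.lift_id, Cardinal.lift_id]
        exact (mul_le_mul' (hFin n) (hφ n)).trans (le_of_eq (mul_eq_self hlam))
    _ = ℵ₀ * lam := by simp [Cardinal.sum_const, Cardinal.lift_uzero]
    _ ≤ lam := by
        rw [mul_comm]
        exact (mul_le_mul' le_rfl hlam).trans (le_of_eq (mul_eq_self hlam))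

end EndHomAux

open EndHomAux

/-- End-homogeneous subsequence extraction: for any language `L`, `L`-structure
`M`, parameter set `B`, infinite cardinal `λ ≥ |L| + |B|`, and sequence of
elements of `M` indexed by the ordinal `(2^λ)⁺`, there is a subset `X` of the
index set of cardinality `λ⁺` such that the subsequence indexed by `X` is
end-homogeneous over `B`: for `i < j` in `X`, the elements `a_i` and `a_j` have
the same type over `B` together with the elements of the subsequence with index
less than `i`. -/
theorem endHomogeneous_extraction (L : FirstOrder.Language.{u, u}) (M : Type u)
    [L.Structure M] (B : Set M) (lam : Cardinal.{u})
    (hlam : ℵ₀ ≤ lam) (hL : L.card ≤ lam) (hB : #B ≤ lam)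
    (a : (Order.succ (2 ^ lam) : Cardinal.{u}).ord.ToType → M) :
    ∃ X : Set (Order.succ (2 ^ lam) : Cardinal.{u}).ord.ToType,
      #X = Order.succ lam ∧
      ∀ i ∈ X, ∀ j ∈ X, i < j →
        SameTypeOver L (B ∪ a '' {l | l ∈ X ∧ l < i})
          (fun _ : Unit => a i) (fun _ : Unit => a j) := by
  classical
  have hc2 : ℵ₀ ≤ 2 ^ lam := hlam.trans (Cardinal.cantor lam).le
  have hκreg : (Order.succ (2 ^ lam) : Cardinal.{u}).IsRegular := Cardinal.isRegular_succ hc2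
  have hκinf : ℵ₀ ≤ (Order.succ (2 ^ lam) : Cardinal.{u}) := hκreg.1
  have hκne : (Order.succ (2 ^ lam) : Cardinal.{u}) ≠ 0 := (aleph0_pos.trans_le hκinf).ne'
  haveI hKne : Nonempty (Order.succ (2 ^ lam) : Cardinal.{u}).ord.ToType :=
    Cardinal.mk_ne_zero_iff.1 (by rw [mk_ord_toType]; exact hκne)
  -- the index type for parameter tuples
  haveI hιne : Nonempty lam.ord.ToType :=
    Cardinal.mk_ne_zero_iff.1
      (by rw [mk_ord_toType]; exact (aleph0_pos.trans_le hlam).ne')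
  have hOlam : #(Option lam.ord.ToType) ≤ lam := by
    rw [mk_option, mk_ord_toType]
    exact (add_le_add le_rfl (one_le_aleph0.trans hlam)).trans
      (le_of_eq (Cardinal.add_eq_self hlam))
  -- strict upper bounds for small subsets of K
  have hub : ∀ S : Set (Order.succ (2 ^ lam) : Cardinal.{u}).ord.ToType, #S < (Order.succ (2 ^ lam) : Cardinal.{u}) → ∃ s : (Order.succ (2 ^ lam) : Cardinal.{u}).ord.ToType, ∀ x ∈ S, x < s := by
    intro S hS
    letI : IsWellOrder (Order.succ (2 ^ lam) : Cardinal.{u}).ord.ToType (· < ·) :=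
      isWellOrder_lt
    have h1 : #S < (Ordinal.type ((· < ·) : (Order.succ (2 ^ lam) : Cardinal.{u}).ord.ToType → (Order.succ (2 ^ lam) : Cardinal.{u}).ord.ToType → Prop)).cof := by
      rw [type_toType]
      exact hS.trans_le hκreg.2
    exact not_isCofinal_iff.1 fun hc => (Order.cof_le hc).not_gt (by rwa [Ordinal.cof_type] at h1)
  have hsubex : ∀ f : (Option lam.ord.ToType) → (Order.succ (2 ^ lam) : Cardinal.{u}).ord.ToType, ∃ s : (Order.succ (2 ^ lam) : Cardinal.{u}).ord.ToType, ∀ x, f x < s := by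
    intro f
    obtain ⟨s, hs⟩ := hub (Set.range f)
      (mk_range_le.trans_lt ((hOlam.trans (Cardinal.cantor lam).le).trans_lt (Order.lt_succ _)))
    exact ⟨s, fun x => hs _ (Set.mem_range_self x)⟩
  choose sUB hsUB using hsubex
  -- the space of types
  have hTS : #(Set (Σ n : ℕ, (Fin n → (↥B ⊕ (Option lam.ord.ToType))) × L.Formula (Unit ⊕ Fin n))) ≤ 2 ^ lam := by
    rw [Cardinal.mk_set]
    exact Cardinal.power_le_power_left two_ne_zero (mk_typeIndex_le hlam hL hB hOlam)
  have hpt0 : ∃ pt : (Order.succ (2 ^ lam) : Cardinal.{u}).ord.ToType, True := ⟨Classical.arbitrary _, trivial⟩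
  obtain ⟨pt, -⟩ := hpt0
  -- the witness functions
  have hwex : ∀ (P : (Option lam.ord.ToType) → (Order.succ (2 ^ lam) : Cardinal.{u}).ord.ToType) (b : (Order.succ (2 ^ lam) : Cardinal.{u}).ord.ToType)
      (t : Set (Σ n : ℕ, (Fin n → (↥B ⊕ (Option lam.ord.ToType))) × L.Formula (Unit ⊕ Fin n))),
      ∃ k : (Order.succ (2 ^ lam) : Cardinal.{u}).ord.ToType,
        (∃ j, b < j ∧ typeOf B a P j = t) → b < k ∧ typeOf B a P k = t := by
    intro P b t
    by_cases h : ∃ j, b < j ∧ typeOf B a P j = t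
    · obtain ⟨j, h1, h2⟩ := h
      exact ⟨j, fun _ => ⟨h1, h2⟩⟩
    · exact ⟨pt, fun hc => absurd hc h⟩
  choose w hw using hwex
  -- the one-step closure operator
  obtain ⟨step, hs1, hs2, hs3, hs4⟩ :
      ∃ step : Set (Order.succ (2 ^ lam) : Cardinal.{u}).ord.ToType → Set (Order.succ (2 ^ lam) : Cardinal.{u}).ord.ToType,
        (∀ S : Set (Order.succ (2 ^ lam) : Cardinal.{u}).ord.ToType, S ⊆ step S) ∧ (∀ S : Set (Order.succ (2 ^ lam) : Cardinal.{u}).ord.ToType, pt ∈ step S) ∧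
        (∀ (S : Set (Order.succ (2 ^ lam) : Cardinal.{u}).ord.ToType) (f : (Option lam.ord.ToType) → (Order.succ (2 ^ lam) : Cardinal.{u}).ord.ToType), (∀ x, f x ∈ S) →
          sUB f ∈ step S ∧ ∀ b ∈ S,
            ∀ t : Set (Σ n : ℕ, (Fin n → (↥B ⊕ (Option lam.ord.ToType))) × L.Formula (Unit ⊕ Fin n)),
              w f b t ∈ step S) ∧
        (∀ S : Set (Order.succ (2 ^ lam) : Cardinal.{u}).ord.ToType, #S ≤ 2 ^ lam → #(step S) ≤ 2 ^ lam) := by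
    refine ⟨fun S => S ∪ {pt} ∪ Set.range
      (fun q : ((Option lam.ord.ToType) → ↥S) ×
          Option (↥S × Set (Σ n : ℕ, (Fin n → (↥B ⊕ (Option lam.ord.ToType))) × L.Formula (Unit ⊕ Fin n))) =>
        Option.elim q.2 (sUB (fun x => ↑(q.1 x)))
          (fun bt => w (fun x => ↑(q.1 x)) ↑bt.1 bt.2)), ?_, ?_, ?_, ?_⟩
    · intro S x hx
      exact Set.mem_union_left _ (Set.mem_union_left _ hx)
    · intro S
      exact Set.mem_union_left _ (Set.mem_union_right _ rfl)
    · intro S f hf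
      constructor
      · exact Set.mem_union_right _ ⟨(fun x => ⟨f x, hf x⟩, none), rfl⟩
      · intro b hb t
        exact Set.mem_union_right _ ⟨(fun x => ⟨f x, hf x⟩, some (⟨b, hb⟩, t)), rfl⟩
    · intro S hS
      have hSTS : #(↥S × Set (Σ n : ℕ, (Fin n → (↥B ⊕ (Option lam.ord.ToType))) × L.Formula (Unit ⊕ Fin n)))
          ≤ 2 ^ lam := by
        rw [Cardinal.mk_prod, Cardinal.lift_id, Cardinal.lift_id]
        exact (mul_le_mul' hS hTS).trans (le_of_eq (Cardinal.mul_eq_self hc2))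
      have hopt : #(Option (↥S × Set (Σ n : ℕ, (Fin n → (↥B ⊕ (Option lam.ord.ToType))) ×
          L.Formula (Unit ⊕ Fin n)))) ≤ 2 ^ lam := by
        rw [Cardinal.mk_option]
        exact (add_le_add hSTS (one_le_aleph0.trans hc2)).trans
          (le_of_eq (Cardinal.add_eq_self hc2))
      have harrow : #((Option lam.ord.ToType) → ↥S) ≤ 2 ^ lam := by
        rw [Cardinal.mk_arrow, Cardinal.lift_id, Cardinal.lift_id]
        calc #↥S ^ #(Option lam.ord.ToType) ≤ (2 ^ lam) ^ #(Option lam.ord.ToType) := Cardinal.power_le_power_right hS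
          _ ≤ (2 ^ lam) ^ lam :=
              Cardinal.power_le_power_left (Cardinal.power_ne_zero _ two_ne_zero) hOlam
          _ = 2 ^ (lam * lam) := (Cardinal.power_mul).symm
          _ = 2 ^ lam := by rw [Cardinal.mul_eq_self hlam]
      have hrange : #(Set.range
          (fun q : ((Option lam.ord.ToType) → ↥S) ×
              Option (↥S × Set (Σ n : ℕ, (Fin n → (↥B ⊕ (Option lam.ord.ToType))) × L.Formula (Unit ⊕ Fin n))) =>
            Option.elim q.2 (sUB (fun x => ↑(q.1 x)))
              (fun bt => w (fun x => ↑(q.1 x)) ↑bt.1 bt.2))) ≤ 2 ^ lam := by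
        refine mk_range_le.trans ?_
        rw [Cardinal.mk_prod, Cardinal.lift_id, Cardinal.lift_id]
        exact (mul_le_mul' harrow hopt).trans (le_of_eq (Cardinal.mul_eq_self hc2))
      have hone : #({pt} : Set (Order.succ (2 ^ lam) : Cardinal.{u}).ord.ToType) ≤ 2 ^ lam := by
        rw [Cardinal.mk_singleton]
        exact one_le_aleph0.trans hc2
      refine (Cardinal.mk_union_le _ _).trans ?_
      refine (add_le_add ((Cardinal.mk_union_le _ _).trans
        ((add_le_add hS hone).trans (le_of_eq (Cardinal.add_eq_self hc2)))) hrange).trans ?_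
      exact le_of_eq (Cardinal.add_eq_self hc2)
  -- the index type T = (succ lam).ord.ToType for the recursion of length lam⁺
  have hTreg : (Order.succ lam).IsRegular := Cardinal.isRegular_succ hlam
  haveI hTne : Nonempty (Order.succ lam).ord.ToType :=
    Cardinal.mk_ne_zero_iff.1
      (by rw [mk_ord_toType]; exact (aleph0_pos.trans_le hTreg.1).ne')
  have hubT : ∀ S : Set (Order.succ lam).ord.ToType, #S ≤ lam →
      ∃ s : (Order.succ lam).ord.ToType, ∀ x ∈ S, x < s := by
    intro S hS
    letI : IsWellOrder (Order.succ lam).ord.ToType (· < ·) := isWellOrder_lt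
    have h1 : #S < (Ordinal.type
        ((· < ·) : (Order.succ lam).ord.ToType → (Order.succ lam).ord.ToType → Prop)).cof := by
      rw [type_toType]
      exact (hS.trans_lt (Order.lt_succ lam)).trans_le hTreg.2
    exact not_isCofinal_iff.1 fun hc => (Order.cof_le hc).not_gt (by rwa [Ordinal.cof_type] at h1)
  have hIioT : ∀ ξ : (Order.succ lam).ord.ToType, #(Set.Iio ξ) ≤ lam := by
    intro ξ
    exact Order.lt_succ_iff.1 (Cardinal.mk_Iio_toType_ord_lt ξ)
  -- the increasing family of closed sets
  obtain ⟨A, hA⟩ : ∃ A : (Order.succ lam).ord.ToType → Set (Order.succ (2 ^ lam) : Cardinal.{u}).ord.ToType,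
      ∀ ξ, A ξ = step (⋃ η : ↥(Set.Iio ξ), A η.1) :=
    ⟨wellFounded_lt.fix (C := fun _ => Set (Order.succ (2 ^ lam) : Cardinal.{u}).ord.ToType)
        (fun ξ ih => step (⋃ η : ↥(Set.Iio ξ), ih η.1 η.2)),
      fun ξ => WellFounded.fix_eq _ _ _⟩
  have hUex : ∃ U : (Order.succ lam).ord.ToType → Set (Order.succ (2 ^ lam) : Cardinal.{u}).ord.ToType,
      U = fun ξ => ⋃ η : ↥(Set.Iio ξ), A η.1 := ⟨_, rfl⟩
  obtain ⟨U, hUdef⟩ := hUex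
  replace hA : ∀ ξ, A ξ = step (U ξ) := fun ξ => by rw [hUdef]; exact hA ξ
  have hUA : ∀ η ξ, η < ξ → A η ⊆ U ξ := by
    intro η ξ h x hx
    simp only [hUdef]
    exact Set.mem_iUnion.2 ⟨⟨η, h⟩, hx⟩
  have hUU : ∀ η ξ, η < ξ → U η ⊆ U ξ := by
    intro η ξ h x hx
    simp only [hUdef] at hx
    obtain ⟨β, hβ⟩ := Set.mem_iUnion.1 hx
    exact hUA β.1 ξ (β.2.trans h) hβ
  have hAmk : ∀ ξ, #(A ξ) ≤ 2 ^ lam := by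
    intro ξ
    induction ξ using WellFoundedLT.induction with
    | ind ξ IH =>
      rw [hA ξ]
      refine hs4 _ ?_
      simp only [hUdef]
      have hsum : Cardinal.sum (fun η : ↥(Set.Iio ξ) => #(A η.1)) ≤
          Cardinal.sum (fun _ : ↥(Set.Iio ξ) => 2 ^ lam) :=
        Cardinal.sum_le_sum _ _ fun η => IH η.1 η.2
      refine (Cardinal.mk_iUnion_le_sum_mk).trans (hsum.trans ?_)
      rw [Cardinal.sum_const']
      exact (mul_le_mul' ((hIioT ξ).trans (Cardinal.cantor lam).le) le_rfl).trans
        (le_of_eq (Cardinal.mul_eq_self hc2))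
  have hAtex : ∃ At : Set (Order.succ (2 ^ lam) : Cardinal.{u}).ord.ToType,
      At = ⋃ ξ, A ξ := ⟨_, rfl⟩
  obtain ⟨At, hAtdef⟩ := hAtex
  have hAtmk : #At ≤ 2 ^ lam := by
    rw [hAtdef]
    have hsum : Cardinal.sum (fun ξ : (Order.succ lam).ord.ToType => #(A ξ)) ≤
        Cardinal.sum (fun _ : (Order.succ lam).ord.ToType => 2 ^ lam) :=
      Cardinal.sum_le_sum _ _ fun ξ => hAmk ξ
    refine (Cardinal.mk_iUnion_le_sum_mk).trans (hsum.trans ?_)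
    rw [Cardinal.sum_const', mk_ord_toType]
    exact (mul_le_mul' (Order.succ_le_of_lt (Cardinal.cantor lam)) le_rfl).trans
      (le_of_eq (Cardinal.mul_eq_self hc2))
  have hAAt : ∀ ξ, A ξ ⊆ At := fun ξ => by rw [hAtdef]; exact Set.subset_iUnion A ξ
  -- an index above everything in At
  obtain ⟨jstar, hjs⟩ := hub At (Order.lt_succ_iff.2 hAtmk)
  have hpt : pt ∈ At := hAAt (Classical.arbitrary _) (by rw [hA]; exact hs2 _)
  -- capture of small subsets of At at some stage
  have hcap : ∀ S : Set (Order.succ (2 ^ lam) : Cardinal.{u}).ord.ToType, S ⊆ At → #S ≤ lam →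
      ∃ ξ, S ⊆ U ξ := by
    intro S hSAt hS
    have hx : ∀ x : ↥S, ∃ ξ, x.1 ∈ A ξ := by
      intro x
      have hm := hSAt x.2
      rw [hAtdef] at hm
      exact Set.mem_iUnion.1 hm
    choose f hf using hx
    obtain ⟨ξ, hξ⟩ := hubT (Set.range f) (mk_range_le.trans hS)
    refine ⟨ξ, fun x hx' => ?_⟩
    exact hUA _ ξ (hξ _ (Set.mem_range_self ⟨x, hx'⟩)) (hf ⟨x, hx'⟩)
  -- the closure property of At
  have hW : ∀ P : (Option lam.ord.ToType) → (Order.succ (2 ^ lam) : Cardinal.{u}).ord.ToType, (∀ x, P x ∈ At) →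
      sUB P ∈ At ∧ ∀ t : Set (Σ n : ℕ, (Fin n → (↥B ⊕ (Option lam.ord.ToType))) × L.Formula (Unit ⊕ Fin n)),
        w P (sUB P) t ∈ At := by
    intro P hP
    obtain ⟨ξ, hξ⟩ := hcap (Set.range P) (by rintro x ⟨y, rfl⟩; exact hP y)
      (mk_range_le.trans hOlam)
    have hPU : ∀ x, P x ∈ U ξ := fun x => hξ (Set.mem_range_self x)
    have h1 : sUB P ∈ A ξ := by
      rw [hA]
      exact (hs3 (U ξ) P hPU).1
    obtain ⟨ξ', hξ'⟩ := hubT {ξ} (by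
      rw [Cardinal.mk_singleton]; exact one_le_aleph0.trans hlam)
    have hlt : ξ < ξ' := hξ' ξ rfl
    have hPU' : ∀ x, P x ∈ U ξ' := fun x => hUU ξ ξ' hlt (hPU x)
    have hb : sUB P ∈ U ξ' := hUA ξ ξ' hlt h1
    refine ⟨hAAt ξ h1, fun t => ?_⟩
    refine hAAt ξ' ?_
    rw [hA]
    exact (hs3 (U ξ') P hPU').2 (sUB P) hb t
  -- surjections onto initial segments of T
  have hGex : ∀ α : (Order.succ lam).ord.ToType, (∃ β, β < α) →
      ∃ g : lam.ord.ToType → (Order.succ lam).ord.ToType, Set.range g = Set.Iio α := by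
    intro α hα
    obtain ⟨β, hβ⟩ := hα
    haveI : Nonempty ↥(Set.Iio α) := ⟨⟨β, hβ⟩⟩
    have h1 : #(Set.Iio α) ≤ #(lam.ord.ToType) := by
      rw [mk_ord_toType]; exact hIioT α
    obtain ⟨f⟩ := (Cardinal.le_def _ _).1 h1
    refine ⟨fun y => (Function.invFun f y : ↥(Set.Iio α)).1, ?_⟩
    have h2 : Set.range (Function.invFun f) = Set.univ :=
      (Function.invFun_surjective f.injective).range_eq
    have h3 : Set.range (fun y => (Function.invFun f y : ↥(Set.Iio α)).1) =
        Subtype.val '' Set.range (Function.invFun f) := Set.range_comp _ _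
    rw [h3, h2, Set.image_univ, Subtype.range_coe]
  choose G hG using hGex
  -- the parameter assignment
  obtain ⟨Pf, hPpt, hPsub, hPcov, hPcong⟩ :
      ∃ Pf : ((Order.succ lam).ord.ToType → (Order.succ (2 ^ lam) : Cardinal.{u}).ord.ToType) →
          (Order.succ lam).ord.ToType → ((Option lam.ord.ToType) → (Order.succ (2 ^ lam) : Cardinal.{u}).ord.ToType),
        (∀ f α, pt ∈ Set.range (Pf f α)) ∧
        (∀ f α x, Pf f α x = pt ∨ ∃ β, β < α ∧ Pf f α x = f β) ∧
        (∀ f α β, β < α → ∃ x, Pf f α x = f β) ∧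
        (∀ f g α, (∀ β, β < α → f β = g β) → Pf f α = Pf g α) := by
    refine ⟨fun f α x => Option.elim x pt
      (fun y => if h : ∃ β, β < α then f (G α h y) else pt), ?_, ?_, ?_, ?_⟩
    · intro f α
      exact ⟨none, rfl⟩
    · intro f α x
      cases x with
      | none => exact Or.inl rfl
      | some y =>
        by_cases h : ∃ β, β < α
        · refine Or.inr ⟨G α h y, ?_, by simp [dif_pos h]⟩
          have := Set.mem_range_self (f := G α h) y
          rwa [hG α h] at this
        · exact Or.inl (by simp [dif_neg h])
    · intro f α β hβ
      have h : ∃ β, β < α := ⟨β, hβ⟩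
      have hmem : β ∈ Set.range (G α h) := by rw [hG α h]; exact hβ
      obtain ⟨y, hy⟩ := hmem
      exact ⟨some y, by simp [dif_pos h, hy]⟩
    · intro f g α hfg
      funext x
      cases x with
      | none => rfl
      | some y =>
        by_cases h : ∃ β, β < α
        · have hmem : G α h y ∈ Set.Iio α := by
            rw [← hG α h]; exact Set.mem_range_self y
          simp only [Option.elim, dif_pos h]
          exact hfg _ hmem
        · simp [dif_neg h]
  -- the recursion
  obtain ⟨i, hifix⟩ : ∃ i : (Order.succ lam).ord.ToType → (Order.succ (2 ^ lam) : Cardinal.{u}).ord.ToType,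
      ∀ α, i α =
        w (Pf (fun β => if h : β < α then i β else pt) α)
          (sUB (Pf (fun β => if h : β < α then i β else pt) α))
          (typeOf B a (Pf (fun β => if h : β < α then i β else pt) α) jstar) :=
    ⟨wellFounded_lt.fix (fun α ih =>
        w (Pf (fun β => if h : β < α then ih β h else pt) α)
          (sUB (Pf (fun β => if h : β < α then ih β h else pt) α))
          (typeOf B a (Pf (fun β => if h : β < α then ih β h else pt) α) jstar)),
      fun α => WellFounded.fix_eq _ _ _⟩
  have hi : ∀ α, i α = w (Pf i α) (sUB (Pf i α)) (typeOf B a (Pf i α) jstar) := by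
    intro α
    have hmask : Pf (fun β => if h : β < α then i β else pt) α = Pf i α :=
      hPcong _ _ α (fun β hβ => dif_pos hβ)
    have h0 := hifix α
    rwa [hmask] at h0
  -- the main invariants
  have main : ∀ α, i α ∈ At ∧ (∀ β, β < α → i β < i α) ∧
      typeOf (L := L) B a (Pf i α) (i α) = typeOf B a (Pf i α) jstar := by
    intro α
    induction α using WellFoundedLT.induction with
    | ind α IH =>
      have hPAt : ∀ x, Pf i α x ∈ At := by
        intro x
        rcases hPsub i α x with h | ⟨β, hβ, h⟩
        · rw [h]; exact hpt
        · rw [h]; exact (IH β hβ).1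
      obtain ⟨hsA, hwA⟩ := hW (Pf i α) hPAt
      have hex : ∃ j, sUB (Pf i α) < j ∧
          typeOf (L := L) B a (Pf i α) j = typeOf B a (Pf i α) jstar :=
        ⟨jstar, hjs _ hsA, rfl⟩
      obtain ⟨hlt, hty⟩ := hw _ _ _ hex
      refine ⟨?_, ?_, ?_⟩
      · rw [hi α]; exact hwA _
      · intro β hβ
        obtain ⟨x, hx⟩ := hPcov i α β hβ
        calc i β = Pf i α x := hx.symm
          _ < sUB (Pf i α) := hsUB _ x
          _ < i α := by rw [hi α]; exact hlt
      · rw [hi α]; exact hty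
  have hmono : StrictMono i := fun β α h => (main α).2.1 β h
  refine ⟨Set.range i, ?_, ?_⟩
  · rw [Cardinal.mk_range_eq _ hmono.injective, mk_ord_toType]
  · rintro _ ⟨α, rfl⟩ _ ⟨γ, rfl⟩ hlt'
    have hαγ : α < γ := hmono.lt_iff_lt.1 hlt'
    have hsub : Set.range (Pf i α) ⊆ Set.range (Pf i γ) := by
      rintro _ ⟨x, rfl⟩
      rcases hPsub i α x with h | ⟨β, hβ, h⟩
      · rw [h]; exact hPpt i γ
      · rw [h]
        obtain ⟨x', hx'⟩ := hPcov i γ β (hβ.trans hαγ)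
        exact ⟨x', hx'⟩
    have h2 : typeOf (L := L) B a (Pf i α) (i γ) = typeOf B a (Pf i α) jstar :=
      typeOf_mono hsub ((main γ).2.2)
    have h3 : typeOf (L := L) B a (Pf i α) (i α) = typeOf B a (Pf i α) (i γ) :=
      ((main α).2.2).trans h2.symm
    refine sameTypeOver_of_typeOf_eq (a := a) (P := Pf i α) (i := i α) (j := i γ) ?_ h3
    rintro m (hmB | ⟨l, ⟨⟨β, rfl⟩, hlil⟩, rfl⟩)
    · exact Or.inl hmB
    · have hβα : β < α := hmono.lt_iff_lt.1 hlil
      obtain ⟨x, hx⟩ := hPcov i α β hβα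
      exact Or.inr ⟨Pf i α x, Set.mem_range_self x, by rw [hx]⟩
end

section
/- In the random k-ary hypergraph (the Fraïssé limit of finite k-uniform hypergraphs), the theory has unbounded (k−1)-splitting: for every ordinal α there is a parameter set B and a (k−1)-partitioned type p = tp(a_0; ...; a_{k-2}/B) such that for every subset C ⊆ B of cardinality < |α|, p (k−1)-splits over C. Concretely, taking distinct vertices a_0,...,a_{k-2} and sequences (b_i)_{i<α}, (b'_i)_{i<α} such that the only hyperedges are {a_0,...,a_{k-2},b_i}, the type tp(a_0;...;a_{k-2}/{b_i, b'_i : i<α}) (k−1)-splits over {b_i, b'_i : i<β} for every β < α. -/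
open FirstOrder Cardinal

universe u

/-- The language of `k`-uniform hypergraphs: a single `k`-ary relation. -/
def hyperLang (k : ℕ) : FirstOrder.Language :=
  ⟨fun _ => Empty, fun n => PLift (n = k)⟩

/-- The `hyperLang k`-structure on a type `M` determined by a set `E` of
finsets of `M` (the hyperedges): the `k`-ary relation holds of a tuple iff the
tuple is injective and its image is a hyperedge. -/
noncomputable def hyperStructure (k : ℕ) {M : Type*} (E : Set (Finset M)) :
    (hyperLang k).Structure M where
  funMap := fun f _ => f.elim
  RelMap := fun {_} _ v =>
    haveI := Classical.decEq M
    Function.Injective v ∧ (Finset.univ.image v ∈ E)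

/-- The `k`-partitioned type `tp(a_0; …; a_{k-1} / B)` `k`-splits over `C ⊆ B`. -/
def KSplits (L : FirstOrder.Language) {M : Type*} [L.Structure M] (k : ℕ)
    (a : Fin k → M) (B C : Set M) : Prop :=
  ∃ (n : ℕ) (φ : L.Formula (Fin k ⊕ Fin n)) (b b' : Fin n → M),
    (∀ i, b i ∈ B) ∧ (∀ i, b' i ∈ B) ∧
    (∀ i : Fin k, SameTypeOver L (C ∪ (a '' {j | j ≠ i})) b b') ∧
    φ.Realize (Sum.elim a b) ∧ ¬ φ.Realize (Sum.elim a b')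

/-!
Write `n = k - 1`. The witness lives on the base hypergraph with vertices
`(Fin n × (I → A)) ⊕ (I × A)` and edges `{(i, f i) | i < n} ∪ {(s, ∑ i, f i s)}` for
`f : Fin n → I → A` and `s : I`. Translating by `δ : Fin n → I → A` (adding `δ i` to the vertices
of block `i` and `∑ i, δ i` to the parameters) maps edges to edges. Take `a i = (i, 0)`: the set
`{a_0, …, a_{n-1}, (s, x)}` is an edge iff `x = 0`, and the translation by `δ` supported at
`(i, s)` with value `1` fixes every `a_j` with `j ≠ i` and every parameter outside column `s`, but
moves `(s, 0)` to `(s, 1)`. A set of fewer than `#I` parameters misses some column `s`, so the type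
splits over it.

To obtain the random extension property without losing these automorphisms, the base is embedded
in its free extension, which adds new vertices recursively and is functorial in the base.
-/

open Function Finset

def IsHypergraphIso {α β : Type*} (σ : α ≃ β) (E : Set (Finset α)) (E' : Set (Finset β)) :
    Prop :=
  ∀ e, σ.finsetCongr e ∈ E' ↔ e ∈ E

namespace IsHypergraphIso

variable {M N : Type*} {k : ℕ} {E : Set (Finset M)} {E' : Set (Finset N)} {σ : M ≃ N}

theorem symm (h : IsHypergraphIso σ E E') : IsHypergraphIso σ.symm E' E := by
  intro e
  rw [← h, ← Equiv.finsetCongr_symm, Equiv.apply_symm_apply]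

noncomputable def toLanguageEquiv (h : IsHypergraphIso σ E E') :
    @Language.Equiv (hyperLang k) M N (hyperStructure k E) (hyperStructure k E') :=
  letI := hyperStructure k E
  letI := hyperStructure k E'
  { toEquiv := σ
    map_fun' := fun f => f.elim
    map_rel' := fun {_} _ x => by
      classical
      show (Injective (σ ∘ x) ∧ univ.image (σ ∘ x) ∈ E') ↔ Injective x ∧ univ.image x ∈ E
      rw [σ.injective.of_comp_iff, ← image_image, ← h, Equiv.finsetCongr_apply, map_eq_image]
      rfl }

@[simp]
theorem toLanguageEquiv_apply (h : IsHypergraphIso σ E E') (x : M) :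
    h.toLanguageEquiv (k := k) x = σ x := rfl

end IsHypergraphIso

theorem sameTypeOver_of_equiv {L : Language} {M : Type*} [L.Structure M] (g : M ≃[L] M)
    {S : Set M} (hS : ∀ x ∈ S, g x = x) {γ : Type*} {b b' : γ → M} (hb : ∀ i, g (b i) = b' i) :
    SameTypeOver L S b b' := by
  intro m c hc φ
  have : Sum.elim b' c = g ∘ Sum.elim b c := by
    ext (i | i)
    exacts [(hb i).symm, (hS _ (hc i)).symm]
  rw [this, Language.StrongHomClass.realize_formula g φ]

def hyperRel (k : ℕ) : (hyperLang k).Relations k := PLift.up rfl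

def edgeFormula (n : ℕ) : (hyperLang (n + 1)).Formula (Fin n ⊕ Fin 1) :=
  (hyperRel (n + 1)).formula
    (Fin.cons (Language.Term.var (Sum.inr 0)) fun i => Language.Term.var (Sum.inl i))

open scoped Classical in
theorem realize_edgeFormula {M : Type*} {n : ℕ} {E : Set (Finset M)} {a : Fin n → M}
    (ha : Injective a) {c : Fin 1 → M} (hc : c 0 ∉ Set.range a) :
    letI := hyperStructure (n + 1) E
    (edgeFormula n).Realize (Sum.elim a c) ↔ insert (c 0) (univ.image a) ∈ E := by
  let _ := hyperStructure (n + 1) E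
  have hterms : (fun i => ((Fin.cons (Language.Term.var (Sum.inr 0)) fun i =>
      Language.Term.var (Sum.inl i) : Fin (n + 1) → (hyperLang (n + 1)).Term _) i).realize
        (Sum.elim a c)) = Fin.cons (c 0) a := by
    ext i
    cases i using Fin.cases <;> simp
  rw [edgeFormula, Language.Formula.realize_rel, hterms]
  show (Injective (Fin.cons (c 0) a : Fin (n + 1) → M) ∧ _) ↔ _
  rw [Fin.cons_injective_iff, Fin.univ_succ, cons_eq_insert, image_insert, map_eq_image,
    image_image]
  simp [ha, hc]

/-- `node codes support` is a new vertex whose edges towards older vertices are exactly the sets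
`insert (node codes support) l.toFinset` with `l ∈ codes`; `support` only serves to place the
vertex above the vertices listed in it. -/
inductive FreeExt (β : Type u) : Type u
  | base : β → FreeExt β
  | node : List (List (FreeExt β)) → List (FreeExt β) → FreeExt β

namespace FreeExt

variable {β γ δ : Type*}

theorem sizeOf_lt_of_mem_codes {x : FreeExt β} {l : List (FreeExt β)} {codes support}
    (hl : l ∈ codes) (hx : x ∈ l) : sizeOf x < sizeOf (node codes support) := by
  have := List.sizeOf_lt_of_mem hl
  have := List.sizeOf_lt_of_mem hx
  simp only [node.sizeOf_spec]
  omega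

theorem sizeOf_lt_of_mem_support {x : FreeExt β} {codes support}
    (hx : x ∈ support) : sizeOf x < sizeOf (node codes support) := by
  have := List.sizeOf_lt_of_mem hx
  simp only [node.sizeOf_spec]
  omega

def baseEmbedding : β ↪ FreeExt β := ⟨base, fun _ _ => base.inj⟩

@[simp]
theorem baseEmbedding_apply (x : β) : baseEmbedding x = base x := rfl

def map (f : β → γ) : FreeExt β → FreeExt γ
  | base x => base (f x)
  | node codes support => node (codes.map (·.map (map f))) (support.map (map f))
decreasing_by
  · exact sizeOf_lt_of_mem_codes ‹_› ‹_›
  · exact sizeOf_lt_of_mem_support ‹_›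

@[simp]
theorem map_base (f : β → γ) (x : β) : map f (base x) = base (f x) := by
  rw [map]

theorem map_node (f : β → γ) (codes support) :
    map f (node codes support) = node (codes.map (·.map (map f))) (support.map (map f)) := by
  rw [map]

theorem map_map (f : β → γ) (g : γ → δ) : ∀ v, map g (map f v) = map (g ∘ f) v
  | base x => by simp only [map_base, comp_apply]
  | node codes support => by
    simp only [map_node, List.map_map, node.injEq]
    constructor
    · refine List.map_congr_left fun l hl => ?_
      simp only [comp_apply, List.map_map]
      exact List.map_congr_left fun x hx => map_map f g x
    · exact List.map_congr_left fun x hx => map_map f g x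
decreasing_by
  · exact sizeOf_lt_of_mem_codes hl hx
  · exact sizeOf_lt_of_mem_support hx

theorem map_id : ∀ v : FreeExt β, map id v = v
  | base x => by simp only [map_base, id]
  | node codes support => by
    simp only [map_node, node.injEq]
    constructor
    · refine (List.map_congr_left fun l hl => ?_).trans codes.map_id
      exact (List.map_congr_left fun x hx => map_id x).trans l.map_id
    · exact (List.map_congr_left fun x hx => map_id x).trans support.map_id
decreasing_by
  · exact sizeOf_lt_of_mem_codes hl hx
  · exact sizeOf_lt_of_mem_support hx

def mapEquiv (σ : β ≃ γ) : FreeExt β ≃ FreeExt γ where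
  toFun := map σ
  invFun := map σ.symm
  left_inv v := by rw [map_map, σ.symm_comp_self, map_id]
  right_inv v := by rw [map_map, σ.self_comp_symm, map_id]

@[simp]
theorem mapEquiv_apply (σ : β ≃ γ) (v : FreeExt β) : mapEquiv σ v = map σ v := rfl

theorem mapEquiv_symm (σ : β ≃ γ) : (mapEquiv σ).symm = mapEquiv σ.symm := rfl

section Edges

open scoped Classical

def edges (k : ℕ) (E : Set (Finset β)) : Set (Finset (FreeExt β)) :=
  {e | e.card = k ∧ ((∃ e₀ ∈ E, e = e₀.map baseEmbedding) ∨
    ∃ codes support, ∃ l ∈ codes, e = insert (node codes support) l.toFinset)}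

theorem map_baseEmbedding_mem_edges_iff {k : ℕ} {E : Set (Finset β)} {e₀ : Finset β} :
    e₀.map baseEmbedding ∈ edges k E ↔ e₀.card = k ∧ e₀ ∈ E := by
  refine ⟨fun ⟨hcard, he⟩ => ⟨card_map baseEmbedding ▸ hcard, ?_⟩, fun ⟨hcard, he₀⟩ =>
    ⟨(card_map _).trans hcard, Or.inl ⟨e₀, he₀, rfl⟩⟩⟩
  obtain ⟨e₁, he₁, he⟩ | ⟨codes, support, l, -, he⟩ := he
  · rwa [map_injective baseEmbedding he]
  · have : node codes support ∈ e₀.map baseEmbedding := he ▸ mem_insert_self _ _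
    simp at this

theorem exists_extension {k : ℕ} (E : Set (Finset β)) (F G : Finset (Finset (FreeExt β)))
    (hF : ∀ s ∈ F, s.card = k) (hFG : Disjoint F G) :
    ∃ v, (∀ s ∈ F, v ∉ s ∧ insert v s ∈ edges (k + 1) E) ∧
      ∀ s ∈ G, insert v s ∉ edges (k + 1) E := by
  set v := node (F.toList.map Finset.toList) ((F ∪ G).biUnion id).toList
  have below : ∀ s ∈ F ∪ G, ∀ x ∈ s, sizeOf x < sizeOf v := fun s hs x hx =>
    sizeOf_lt_of_mem_support (by simpa using ⟨s, mem_union.1 hs, hx⟩)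
  have fresh : ∀ s ∈ F ∪ G, v ∉ s := fun s hs hv => (below s hs v hv).false
  refine ⟨v, fun s hs => ⟨fresh s (mem_union_left _ hs), ?_, ?_⟩, fun s hs => ?_⟩
  · rw [card_insert_of_notMem (fresh s (mem_union_left _ hs)), hF s hs]
  · exact Or.inr ⟨_, _, s.toList, List.mem_map_of_mem (mem_toList.2 hs), by rw [toList_toFinset]⟩
  rintro ⟨-, ⟨e₀, -, he⟩ | ⟨codes, support, l, hl, he⟩⟩
  · have : v ∈ e₀.map baseEmbedding := he ▸ mem_insert_self v s
    simp [v] at this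
  have hvs := fresh s (mem_union_right _ hs)
  rcases mem_insert.1 (he ▸ mem_insert_self _ _ : node codes support ∈ insert v s) with
    htop | htop
  · obtain ⟨rfl, -⟩ := node.inj htop
    obtain ⟨t, ht, rfl⟩ := List.mem_map.1 hl
    rw [htop, toList_toFinset] at he
    have htF : t ∈ F := mem_toList.1 ht
    have hst : s = t := by
      rw [← erase_insert hvs, he, erase_insert (fresh t (mem_union_left _ htF))]
    exact disjoint_left.1 hFG htF (hst ▸ hs)
  · -- a vertex of `s` can only create this edge if `v` lies below it, but `v` is above all of `s`
    have hv : v ∈ l := by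
      have hne : v ≠ node codes support := fun h => hvs (h ▸ htop)
      have : v ∈ insert (node codes support) l.toFinset := he ▸ mem_insert_self v s
      simpa [hne] using this
    have := below s (mem_union_right _ hs) _ htop
    have := sizeOf_lt_of_mem_codes (support := support) hl hv
    omega

theorem finsetCongr_mapEquiv_mem_edges {k : ℕ} {E : Set (Finset β)} {E' : Set (Finset γ)}
    (σ : β ≃ γ) (hσ : ∀ e ∈ E, σ.finsetCongr e ∈ E') {e : Finset (FreeExt β)}
    (he : e ∈ edges k E) : (mapEquiv σ).finsetCongr e ∈ edges k E' := by
  simp only [Equiv.finsetCongr_apply] at hσ ⊢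
  obtain ⟨hcard, ⟨e₀, he₀, rfl⟩ | ⟨codes, support, l, hl, rfl⟩⟩ := he
  · refine ⟨by rw [card_map, hcard], Or.inl ⟨e₀.map σ.toEmbedding, hσ e₀ he₀, ?_⟩⟩
    simp only [Finset.map_map]
    congr 1
    ext x
    simp
  · refine ⟨by rw [card_map, hcard], Or.inr ⟨_, support.map (map σ), l.map (map σ),
      List.mem_map_of_mem hl, ?_⟩⟩
    ext x
    simp [map_node, -mem_map_equiv]

end Edges

end FreeExt

theorem IsHypergraphIso.freeExt {β γ : Type*} {k : ℕ} {E : Set (Finset β)}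
    {E' : Set (Finset γ)} {σ : β ≃ γ} (h : IsHypergraphIso σ E E') :
    IsHypergraphIso (FreeExt.mapEquiv σ) (FreeExt.edges k E) (FreeExt.edges k E') := by
  refine fun e => ⟨fun he => ?_, FreeExt.finsetCongr_mapEquiv_mem_edges σ fun e => (h e).2⟩
  have := FreeExt.finsetCongr_mapEquiv_mem_edges σ.symm (fun e => (h.symm e).2) he
  rwa [← FreeExt.mapEquiv_symm, ← Equiv.finsetCongr_symm, Equiv.symm_apply_apply] at this

section BaseHypergraph

variable (n : ℕ) (I A : Type*) [AddCommGroup A]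

abbrev BaseVertex := (Fin n × (I → A)) ⊕ (I × A)

variable {n I A}

open scoped Classical

noncomputable def baseEdge (f : Fin n → I → A) (s : I) : Finset (BaseVertex n I A) :=
  insert (.inr (s, ∑ i, f i s)) (univ.image fun i => .inl (i, f i))

variable (n I A) in
def baseEdges : Set (Finset (BaseVertex n I A)) :=
  {e | ∃ f s, baseEdge f s = e}

def shift (δ : Fin n → I → A) : BaseVertex n I A ≃ BaseVertex n I A where
  toFun := Sum.map (fun p => (p.1, p.2 + δ p.1)) fun p => (p.1, p.2 + (∑ i, δ i) p.1)
  invFun := Sum.map (fun p => (p.1, p.2 - δ p.1)) fun p => (p.1, p.2 - (∑ i, δ i) p.1)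
  left_inv := by rintro (_ | _) <;> simp
  right_inv := by rintro (_ | _) <;> simp

@[simp]
theorem shift_inl (δ : Fin n → I → A) (i : Fin n) (g : I → A) :
    shift δ (.inl (i, g)) = .inl (i, g + δ i) := rfl

@[simp]
theorem shift_inr (δ : Fin n → I → A) (s : I) (x : A) :
    shift δ (.inr (s, x)) = .inr (s, x + (∑ i, δ i) s) := rfl

theorem finsetCongr_shift_baseEdge (δ f : Fin n → I → A) (s : I) :
    (shift δ).finsetCongr (baseEdge f s) = baseEdge (f + δ) s := by
  simp only [baseEdge, Equiv.finsetCongr_apply, map_eq_image, Embedding.coeFn_mk, image_insert,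
    shift_inr, Finset.sum_apply, image_image, comp_def, shift_inl, Pi.add_apply]
  rw [Finset.sum_add_distrib]

theorem isHypergraphIso_shift (δ : Fin n → I → A) :
    IsHypergraphIso (shift δ) (baseEdges n I A) (baseEdges n I A) := by
  refine fun e => ⟨fun ⟨f, s, he⟩ => ⟨f - δ, s, ?_⟩, fun ⟨f, s, he⟩ => ⟨f + δ, s, ?_⟩⟩
  · apply (shift δ).finsetCongr.injective
    rw [finsetCongr_shift_baseEdge, sub_add_cancel, he]
  · rw [← he, finsetCongr_shift_baseEdge]

theorem insert_mem_baseEdges_iff (s : I) (x : A) :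
    insert (.inr (s, x)) (univ.image fun i => .inl (i, 0)) ∈ baseEdges n I A ↔ x = 0 := by
  refine ⟨fun ⟨f, t, he⟩ => ?_, fun hx => ⟨0, s, by simp [baseEdge, hx]⟩⟩
  have hf : f = 0 := by
    ext i : 1
    have : .inl (i, f i) ∈ baseEdge f t := mem_insert_of_mem (mem_image_of_mem _ (mem_univ i))
    rw [he] at this
    simpa [eq_comm] using this
  subst hf
  have : .inr (t, ∑ i, (0 : Fin n → I → A) i t) ∈ baseEdge 0 t := mem_insert_self _ _
  rw [he] at this
  simp only [mem_insert, Sum.inr.injEq, Prod.mk.injEq, mem_image, mem_univ, true_and,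
    reduceCtorEq, exists_false, or_false] at this
  simpa [eq_comm] using this.2

end BaseHypergraph

section Witness

open FreeExt

variable (n : ℕ) (I A : Type*)

def param : I × A → FreeExt (BaseVertex n I A) := fun p => base (.inr p)

theorem param_injective : Injective (param n I A) := fun p q h => by
  simpa [param] using h

def splitTuple [Zero A] : Fin n → FreeExt (BaseVertex n I A) := fun i => base (.inl (i, 0))

theorem splitTuple_injective [Zero A] : Injective (splitTuple n I A) := fun i j h => by
  simpa [splitTuple] using h

variable {n I A}

theorem param_notMem_range_splitTuple [Zero A] (p : I × A) :
    param n I A p ∉ Set.range (splitTuple n I A) := by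
  simp [param, splitTuple]

open scoped Classical in
theorem insert_param_mem_edges_iff [AddCommGroup A] (s : I) (x : A) :
    insert (param n I A (s, x)) (univ.image (splitTuple n I A)) ∈
      edges (n + 1) (baseEdges n I A) ↔ x = 0 := by
  set e₀ : Finset (BaseVertex n I A) := insert (.inr (s, x)) (univ.image fun i => .inl (i, 0))
  have hcard : e₀.card = n + 1 := by
    rw [card_insert_of_notMem (by simp), card_image_of_injective _ (fun i j h => by simpa using h),
      card_univ, Fintype.card_fin]
  have he₀ : insert (param n I A (s, x)) (univ.image (splitTuple n I A)) =
      e₀.map baseEmbedding := by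
    simp only [e₀, param, map_eq_image, image_insert, baseEmbedding_apply, image_image, comp_def]
    rfl
  rw [he₀, map_baseEmbedding_mem_edges_iff, insert_mem_baseEdges_iff, and_iff_right hcard]

theorem kSplits_splitTuple [AddCommGroup A] {C : Set (FreeExt (BaseVertex n I A))}
    (hCB : C ⊆ Set.range (param n I A)) {s : I} (hs : ∀ x, param n I A (s, x) ∉ C) {x : A}
    (hx : x ≠ 0) :
    @KSplits (hyperLang (n + 1)) _ (hyperStructure (n + 1) (edges (n + 1) (baseEdges n I A)))
      n (splitTuple n I A) (Set.range (param n I A)) C := by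
  classical
  let _ := hyperStructure (n + 1) (edges (n + 1) (baseEdges n I A))
  refine ⟨1, edgeFormula n, fun _ => param n I A (s, 0), fun _ => param n I A (s, x),
    fun _ => Set.mem_range_self _, fun _ => Set.mem_range_self _, fun i => ?_, ?_, ?_⟩
  · set δ : Fin n → I → A := Pi.single i (Pi.single s x)
    have hδ : ∑ j, δ j = Pi.single s x := by simp [δ, Finset.sum_pi_single']
    refine sameTypeOver_of_equiv (isHypergraphIso_shift δ).freeExt.toLanguageEquiv ?_ fun _ => ?_
    · rintro y (hy | ⟨j, hj, rfl⟩)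
      · obtain ⟨⟨t, z⟩, rfl⟩ := hCB hy
        have hts : t ≠ s := by
          rintro rfl
          exact hs z hy
        simp only [IsHypergraphIso.toLanguageEquiv_apply, mapEquiv_apply, param, map_base,
          shift_inr, hδ, Pi.single_eq_of_ne hts, add_zero]
      · simp [splitTuple, δ, Pi.single_eq_of_ne hj]
    · simp only [IsHypergraphIso.toLanguageEquiv_apply, mapEquiv_apply, param, map_base,
        shift_inr, hδ, Pi.single_eq_same, zero_add]
  · rw [realize_edgeFormula (splitTuple_injective n I A) (param_notMem_range_splitTuple _)]
    exact (insert_param_mem_edges_iff s 0).2 rfl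
  · rw [realize_edgeFormula (splitTuple_injective n I A) (param_notMem_range_splitTuple _)]
    exact fun h => hx ((insert_param_mem_edges_iff s x).1 h)

end Witness

theorem exists_forall_notMem_of_mk_lt {I M : Type u} {A : Type*} {f : I × A → M}
    (hf : Injective f) {C : Set M} (hC : #C < #I) : ∃ s, ∀ x, f (s, x) ∉ C := by
  by_contra! h
  choose x hx using h
  have : #I ≤ #C := mk_le_of_injective (f := fun s => (⟨f (s, x s), hx s⟩ : C))
    fun s t hst => congrArg Prod.fst (hf (Subtype.ext_iff.1 hst))
  exact this.not_gt hC

/-- The theory of the random `k`-ary hypergraph has unbounded `(k-1)`-splitting: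
for every cardinal `λ` there is a `k`-uniform hypergraph with the random
extension property, a parameter set `B`, and a `(k-1)`-partitioned type
`tp(a_0; …; a_{k-2} / B)` that `(k-1)`-splits over every subset `C ⊆ B` of
cardinality less than `λ`. -/
theorem randomHypergraph_unbounded_splitting (k : ℕ) (hk : 2 ≤ k)
    (lam : Cardinal.{u}) :
    ∃ (M : Type u) (_ : DecidableEq M) (E : Set (Finset M)),
      (∀ e ∈ E, e.card = k) ∧
      (∀ F G : Finset (Finset M), (∀ s ∈ F, s.card = k - 1) →
        (∀ s ∈ G, s.card = k - 1) → Disjoint F G →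
        ∃ v : M, (∀ s ∈ F, v ∉ s ∧ insert v s ∈ E) ∧ (∀ s ∈ G, insert v s ∉ E)) ∧
      ∃ (B : Set M) (a : Fin (k - 1) → M), Function.Injective a ∧
        ∀ C : Set M, C ⊆ B → #C < lam →
          @KSplits (hyperLang k) M (hyperStructure k E) (k - 1) a B C := by
  obtain ⟨n, rfl⟩ : ∃ n, k = n + 1 := ⟨k - 1, by omega⟩
  rw [Nat.add_sub_cancel]
  classical
  refine ⟨FreeExt (BaseVertex n lam.out (ZMod 2)), inferInstance,
    FreeExt.edges (n + 1) (baseEdges n lam.out (ZMod 2)), fun e he => he.1,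
    fun F G hF _ hFG => FreeExt.exists_extension _ F G hF hFG,
    Set.range (param n lam.out (ZMod 2)), splitTuple n lam.out (ZMod 2),
    splitTuple_injective n _ _, fun C hCB hC => ?_⟩
  obtain ⟨s, hs⟩ := exists_forall_notMem_of_mk_lt (param_injective n _ (ZMod 2))
    (hC.trans_eq (mk_out lam).symm)
  exact kSplits_splitTuple hCB hs one_ne_zero
end

section
/- Free amalgamation for colored complete k-hypergraph structures: Let Equiv⁰_k be the class of structures in a language with one 2k-ary relation E, satisfying: E is a partial equivalence relation on k-tuples; E(x̄,x̄) holds iff the entries of x̄ are pairwise distinct; and E is invariant under permuting the entries of each k-tuple (for tuples of distinct entries). Then the class of finite models of Equiv⁰_k has the amalgamation property: given finite models A ⊆ B and A ⊆ C, the free amalgam of B and C over A (disjoint union over A, with E holding only on instances from B or from C, closed under the equivalence-relation axioms taking the transitive closure) is again a model of Equiv⁰_k and contains B and C as substructures. -/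
/-- A model of `Equiv⁰_k` on the vertex set `V`: a partial equivalence relation
`E` on `k`-tuples whose domain is exactly the tuples with pairwise distinct
entries, invariant under permuting the entries of each tuple. -/
structure EquivKStruct (k : ℕ) (V : Type*) where
  /-- The `2k`-ary relation, viewed as a binary relation on `k`-tuples. -/
  E : (Fin k → V) → (Fin k → V) → Prop
  symm : ∀ x y, E x y → E y x
  trans : ∀ x y z, E x y → E y z → E x z
  refl_iff : ∀ x, E x x ↔ Function.Injective x
  perm : ∀ (x : Fin k → V) (σ : Equiv.Perm (Fin k)), Function.Injective x →
    E x (x ∘ σ)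

/-- `f` is an embedding of `Equiv⁰_k`-structures: injective and preserving and
reflecting the relation `E`, so that the image is an induced substructure. -/
def EquivKEmbedding {k : ℕ} {V W : Type*} (SV : EquivKStruct k V)
    (SW : EquivKStruct k W) (f : V → W) : Prop :=
  Function.Injective f ∧ ∀ x y : Fin k → V, SW.E (f ∘ x) (f ∘ y) ↔ SV.E x y

namespace EquivKAmalg

open Function

universe u

variable {k : ℕ} {A B C : Type u}

open Classical in
/-- The map from `C` into the free amalgam `B ⊕ (C \ range g)`. -/
noncomputable def gmap (f : A → B) (g : A → C) (c : C) :
    B ⊕ {c : C // c ∉ Set.range g} :=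
  if h : c ∈ Set.range g then Sum.inl (f h.choose) else Sum.inr ⟨c, h⟩

theorem gmap_g {f : A → B} {g : A → C} (hg : Injective g) (a : A) :
    gmap f g (g a) = Sum.inl (f a) := by
  have h : g a ∈ Set.range g := ⟨a, rfl⟩
  rw [gmap, dif_pos h, hg h.choose_spec]

theorem inl_eq_gmap {f : A → B} {g : A → C} {b : B} {c : C}
    (h : Sum.inl b = gmap f g c) : ∃ a, b = f a ∧ c = g a := by
  by_cases hc : c ∈ Set.range g
  · rw [gmap, dif_pos hc] at h
    exact ⟨hc.choose, Sum.inl.inj h, hc.choose_spec.symm⟩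
  · rw [gmap, dif_neg hc] at h; exact absurd h (by simp)

theorem gmap_inj {f : A → B} {g : A → C} (hf : Injective f) (hg : Injective g) :
    Injective (gmap f g) := by
  intro c1 c2 h
  by_cases h1 : c1 ∈ Set.range g <;> by_cases h2 : c2 ∈ Set.range g
  · obtain ⟨a1, rfl⟩ := h1; obtain ⟨a2, rfl⟩ := h2
    rw [gmap_g hg, gmap_g hg] at h
    exact congrArg g (hf (Sum.inl.inj h))
  · rw [gmap, dif_pos h1, gmap, dif_neg h2] at h; simp at h
  · rw [gmap, dif_neg h1, gmap, dif_pos h2] at h; simp at h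
  · rw [gmap, dif_neg h1, gmap, dif_neg h2] at h
    simpa using congrArg Subtype.val (Sum.inr.inj h)

theorem comp_inl_inj {g : A → C} {x y : Fin k → B}
    (h : (Sum.inl ∘ x : Fin k → B ⊕ {c : C // c ∉ Set.range g}) = Sum.inl ∘ y) :
    x = y :=
  funext fun i => Sum.inl.inj (congrFun h i)

theorem comp_gmap_inj {f : A → B} {g : A → C} (hf : Injective f)
    (hg : Injective g) {x y : Fin k → C}
    (h : gmap f g ∘ x = gmap f g ∘ y) : x = y :=
  funext fun i => gmap_inj hf hg (congrFun h i)

theorem inl_comp_eq_gmap {f : A → B} {g : A → C} {x : Fin k → B}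
    {z : Fin k → C} (h : Sum.inl ∘ x = gmap f g ∘ z) :
    ∃ a : Fin k → A, x = f ∘ a ∧ z = g ∘ a := by
  choose a h1 h2 using fun i => inl_eq_gmap (congrFun h i)
  exact ⟨a, funext h1, funext h2⟩

variable (SB : EquivKStruct k B) (SC : EquivKStruct k C) (f : A → B) (g : A → C)

/-- The copy of `E_B` in the amalgam. -/
def EBr (x y : Fin k → B ⊕ {c : C // c ∉ Set.range g}) : Prop :=
  ∃ x' y', SB.E x' y' ∧ x = Sum.inl ∘ x' ∧ y = Sum.inl ∘ y'

/-- The copy of `E_C` in the amalgam. -/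
def ECr (x y : Fin k → B ⊕ {c : C // c ∉ Set.range g}) : Prop :=
  ∃ x' y', SC.E x' y' ∧ x = gmap f g ∘ x' ∧ y = gmap f g ∘ y'

/-- Purely-`B` tuples. -/
def PB (x : Fin k → B ⊕ {c : C // c ∉ Set.range g}) : Prop :=
  ∃ x₀, x = Sum.inl ∘ x₀

/-- Purely-`C` tuples. -/
def PC (x : Fin k → B ⊕ {c : C // c ∉ Set.range g}) : Prop :=
  ∃ x₀, x = gmap f g ∘ x₀

/-- Generators of the free amalgam relation. -/
def Rgen (x y : Fin k → B ⊕ {c : C // c ∉ Set.range g}) : Prop :=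
  EBr SB g x y ∨ ECr SC f g x y ∨
    (Injective x ∧ ∃ σ : Equiv.Perm (Fin k), y = x ∘ σ)

/-- Explicit description of the equivalence closure of `Rgen` (on
injective tuples). -/
def Ehat (x y : Fin k → B ⊕ {c : C // c ∉ Set.range g}) : Prop :=
  EBr SB g x y ∨ ECr SC f g x y ∨
    (∃ m, EBr SB g x m ∧ ECr SC f g m y) ∨
    (∃ m, ECr SC f g x m ∧ EBr SB g m y) ∨
    (¬ PB g x ∧ ¬ PC f g x ∧ Injective x ∧
      ∃ σ : Equiv.Perm (Fin k), y = x ∘ σ)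

variable {SB SC f g}

theorem EBr.pb_left {x y} (h : EBr SB g x y) : PB g x := by
  obtain ⟨x', y', _, rfl, rfl⟩ := h; exact ⟨x', rfl⟩

theorem EBr.pb_right {x y} (h : EBr SB g x y) : PB g y := by
  obtain ⟨x', y', _, rfl, rfl⟩ := h; exact ⟨y', rfl⟩

theorem ECr.pc_left {x y} (h : ECr SC f g x y) : PC f g x := by
  obtain ⟨x', y', _, rfl, rfl⟩ := h; exact ⟨x', rfl⟩

theorem ECr.pc_right {x y} (h : ECr SC f g x y) : PC f g y := by
  obtain ⟨x', y', _, rfl, rfl⟩ := h; exact ⟨y', rfl⟩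

theorem EBr.symm {x y} (h : EBr SB g x y) : EBr SB g y x := by
  obtain ⟨x', y', hE, rfl, rfl⟩ := h; exact ⟨y', x', SB.symm _ _ hE, rfl, rfl⟩

theorem ECr.symm {x y} (h : ECr SC f g x y) : ECr SC f g y x := by
  obtain ⟨x', y', hE, rfl, rfl⟩ := h; exact ⟨y', x', SC.symm _ _ hE, rfl, rfl⟩

theorem EBr.trans {x y z} (h1 : EBr SB g x y) (h2 : EBr SB g y z) :
    EBr SB g x z := by
  obtain ⟨x', y', hE, rfl, rfl⟩ := h1
  obtain ⟨y'', z', hE', hy, rfl⟩ := h2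
  obtain rfl := comp_inl_inj hy
  exact ⟨x', z', SB.trans _ _ _ hE hE', rfl, rfl⟩

theorem pb_perm {x : Fin k → B ⊕ {c : C // c ∉ Set.range g}}
    (σ : Equiv.Perm (Fin k)) (h : PB g (x ∘ ⇑σ)) : PB g x := by
  obtain ⟨x₀, hx⟩ := h
  refine ⟨x₀ ∘ ⇑σ.symm, funext fun i => ?_⟩
  have := congrFun hx (σ.symm i)
  simpa using this

theorem pc_perm {x : Fin k → B ⊕ {c : C // c ∉ Set.range g}}
    (σ : Equiv.Perm (Fin k)) (h : PC f g (x ∘ ⇑σ)) : PC f g x := by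
  obtain ⟨x₀, hx⟩ := h
  refine ⟨x₀ ∘ ⇑σ.symm, funext fun i => ?_⟩
  have := congrFun hx (σ.symm i)
  simpa using this

theorem ebr_inl {x y : Fin k → B}
    (h : EBr SB g (Sum.inl ∘ x) (Sum.inl ∘ y)) : SB.E x y := by
  obtain ⟨x', y', hE, hx', hy'⟩ := h
  obtain rfl := comp_inl_inj hx'
  obtain rfl := comp_inl_inj hy'
  exact hE

section hfg

variable {SA : EquivKStruct k A}
variable (hf : EquivKEmbedding SA SB f) (hg : EquivKEmbedding SA SC g)

include hf hg

theorem ecr_gmap {x y : Fin k → C}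
    (h : ECr SC f g (gmap f g ∘ x) (gmap f g ∘ y)) : SC.E x y := by
  obtain ⟨x', y', hE, hx', hy'⟩ := h
  obtain rfl := comp_gmap_inj hf.1 hg.1 hx'
  obtain rfl := comp_gmap_inj hf.1 hg.1 hy'
  exact hE

theorem ECr.trans' {x y z} (h1 : ECr SC f g x y) (h2 : ECr SC f g y z) :
    ECr SC f g x z := by
  obtain ⟨x', y', hE, rfl, rfl⟩ := h1
  obtain ⟨y'', z', hE', hy, rfl⟩ := h2
  obtain rfl := comp_gmap_inj hf.1 hg.1 hy
  exact ⟨x', z', SC.trans _ _ _ hE hE', rfl, rfl⟩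

/-- Transfer: a `C`-relation between purely-`B` tuples is a `B`-relation. -/
theorem transferCB {x y} (h : ECr SC f g x y) (hx : PB g x) (hy : PB g y) :
    EBr SB g x y := by
  obtain ⟨x', y', hE, rfl, rfl⟩ := h
  obtain ⟨x₀, hx0⟩ := hx
  obtain ⟨y₀, hy0⟩ := hy
  obtain ⟨a, rfl, rfl⟩ := inl_comp_eq_gmap hx0.symm
  obtain ⟨a', rfl, rfl⟩ := inl_comp_eq_gmap hy0.symm
  have hA : SA.E a a' := (hg.2 a a').mp hE
  exact ⟨f ∘ a, f ∘ a', (hf.2 a a').mpr hA,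
    funext fun i => gmap_g hg.1 (a i), funext fun i => gmap_g hg.1 (a' i)⟩

/-- Transfer: a `B`-relation between purely-`C` tuples is a `C`-relation. -/
theorem transferBC {x y} (h : EBr SB g x y) (hx : PC f g x) (hy : PC f g y) :
    ECr SC f g x y := by
  obtain ⟨x', y', hE, rfl, rfl⟩ := h
  obtain ⟨x₀, hx0⟩ := hx
  obtain ⟨y₀, hy0⟩ := hy
  obtain ⟨a, rfl, rfl⟩ := inl_comp_eq_gmap hx0
  obtain ⟨a', rfl, rfl⟩ := inl_comp_eq_gmap hy0
  have hA : SA.E a a' := (hf.2 a a').mp hE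
  exact ⟨g ∘ a, g ∘ a', (hg.2 a a').mpr hA,
    funext fun i => (gmap_g hg.1 (a i)).symm,
    funext fun i => (gmap_g hg.1 (a' i)).symm⟩

omit hf hg in
theorem ehat_symm {x y} (h : Ehat SB SC f g x y) : Ehat SB SC f g y x := by
  rcases h with h | h | ⟨m, h1, h2⟩ | ⟨m, h1, h2⟩ | ⟨hb, hc, hi, σ, rfl⟩
  · exact Or.inl h.symm
  · exact Or.inr (Or.inl h.symm)
  · exact Or.inr (Or.inr (Or.inr (Or.inl ⟨m, h2.symm, h1.symm⟩)))
  · exact Or.inr (Or.inr (Or.inl ⟨m, h2.symm, h1.symm⟩))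
  · refine Or.inr (Or.inr (Or.inr (Or.inr
      ⟨fun h => hb (pb_perm σ h), fun h => hc (pc_perm σ h),
        hi.comp σ.injective, σ.symm, funext fun i => by simp⟩)))

theorem ehat_trans {x y z} (h1 : Ehat SB SC f g x y)
    (h2 : Ehat SB SC f g y z) : Ehat SB SC f g x z := by
  rcases h1 with h1 | h1 | ⟨m, hm1, hm2⟩ | ⟨m, hm1, hm2⟩ | ⟨hb, hc, hi, σ, rfl⟩
  · -- x ~B y
    rcases h2 with h2 | h2 | ⟨n, hn1, hn2⟩ | ⟨n, hn1, hn2⟩ | ⟨hb, hc, _, τ, rfl⟩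
    · exact Or.inl (h1.trans h2)
    · exact Or.inr (Or.inr (Or.inl ⟨y, h1, h2⟩))
    · exact Or.inr (Or.inr (Or.inl ⟨n, h1.trans hn1, hn2⟩))
    · have h3 : EBr SB g y n := transferCB hf hg hn1 h1.pb_right hn2.pb_left
      exact Or.inl ((h1.trans h3).trans hn2)
    · exact absurd h1.pb_right hb
  · -- x ~C y
    rcases h2 with h2 | h2 | ⟨n, hn1, hn2⟩ | ⟨n, hn1, hn2⟩ | ⟨hb, hc, _, τ, rfl⟩
    · exact Or.inr (Or.inr (Or.inr (Or.inl ⟨y, h1, h2⟩)))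
    · exact Or.inr (Or.inl (h1.trans' hf hg h2))
    · have h3 : ECr SC f g y n := transferBC hf hg hn1 h1.pc_right hn2.pc_left
      exact Or.inr (Or.inl ((h1.trans' hf hg h3).trans' hf hg hn2))
    · exact Or.inr (Or.inr (Or.inr (Or.inl ⟨n, h1.trans' hf hg hn1, hn2⟩)))
    · exact absurd h1.pc_right hc
  · -- x ~B m ~C y
    rcases h2 with h2 | h2 | ⟨n, hn1, hn2⟩ | ⟨n, hn1, hn2⟩ | ⟨hb, hc, _, τ, rfl⟩
    · have h3 : EBr SB g m y := transferCB hf hg hm2 hm1.pb_right h2.pb_left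
      exact Or.inl ((hm1.trans h3).trans h2)
    · exact Or.inr (Or.inr (Or.inl ⟨m, hm1, hm2.trans' hf hg h2⟩))
    · have h3 : ECr SC f g y n := transferBC hf hg hn1 hm2.pc_right hn2.pc_left
      exact Or.inr (Or.inr (Or.inl
        ⟨m, hm1, (hm2.trans' hf hg h3).trans' hf hg hn2⟩))
    · have hmn : ECr SC f g m n := hm2.trans' hf hg hn1
      have h3 : EBr SB g m n := transferCB hf hg hmn hm1.pb_right hn2.pb_left
      exact Or.inl ((hm1.trans h3).trans hn2)
    · exact absurd hm2.pc_right hc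
  · -- x ~C m ~B y
    rcases h2 with h2 | h2 | ⟨n, hn1, hn2⟩ | ⟨n, hn1, hn2⟩ | ⟨hb, hc, _, τ, rfl⟩
    · exact Or.inr (Or.inr (Or.inr (Or.inl ⟨m, hm1, hm2.trans h2⟩)))
    · have h3 : ECr SC f g m y := transferBC hf hg hm2 hm1.pc_right h2.pc_left
      exact Or.inr (Or.inl ((hm1.trans' hf hg h3).trans' hf hg h2))
    · have h3 : ECr SC f g m n :=
        transferBC hf hg (hm2.trans hn1) hm1.pc_right hn2.pc_left
      exact Or.inr (Or.inl ((hm1.trans' hf hg h3).trans' hf hg hn2))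
    · have h3 : ECr SC f g m y := transferBC hf hg hm2 hm1.pc_right hn1.pc_left
      exact Or.inr (Or.inr (Or.inr (Or.inl
        ⟨n, (hm1.trans' hf hg h3).trans' hf hg hn1, hn2⟩)))
    · exact absurd hm2.pb_right hb
  · -- mixed permutation case
    have hby : ¬ PB g (x ∘ ⇑σ) := fun h => hb (pb_perm σ h)
    have hcy : ¬ PC f g (x ∘ ⇑σ) := fun h => hc (pc_perm σ h)
    rcases h2 with h2 | h2 | ⟨n, hn1, hn2⟩ | ⟨n, hn1, hn2⟩ | ⟨_, _, _, τ, rfl⟩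
    · exact absurd h2.pb_left hby
    · exact absurd h2.pc_left hcy
    · exact absurd hn1.pb_left hby
    · exact absurd hn1.pc_left hcy
    · exact Or.inr (Or.inr (Or.inr (Or.inr
        ⟨hb, hc, hi, (τ.trans σ), funext fun i => rfl⟩)))

omit hf hg in
theorem rgen_le {x y} (h : Rgen SB SC f g x y) : Ehat SB SC f g x y := by
  rcases h with h | h | ⟨hi, σ, rfl⟩
  · exact Or.inl h
  · exact Or.inr (Or.inl h)
  · by_cases hb : PB g x
    · obtain ⟨x₀, rfl⟩ := hb
      have hx₀ : Injective x₀ := fun i j hij => hi (congrArg Sum.inl hij)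
      exact Or.inl ⟨x₀, x₀ ∘ σ, SB.perm x₀ σ hx₀, rfl, rfl⟩
    · by_cases hc : PC f g x
      · obtain ⟨x₀, rfl⟩ := hc
        have hx₀ : Injective x₀ := fun i j hij => hi (congrArg (gmap f g) hij)
        exact Or.inr (Or.inl ⟨x₀, x₀ ∘ σ, SC.perm x₀ σ hx₀, rfl, rfl⟩)
      · exact Or.inr (Or.inr (Or.inr (Or.inr ⟨hb, hc, hi, σ, rfl⟩)))

theorem eqvGen_cases {x y} (h : Relation.EqvGen (Rgen SB SC f g) x y) :
    x = y ∨ Ehat SB SC f g x y := by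
  induction h with
  | rel a b hab => exact Or.inr (rgen_le hab)
  | refl a => exact Or.inl rfl
  | symm a b _ ih =>
    rcases ih with rfl | h
    · exact Or.inl rfl
    · exact Or.inr (ehat_symm h)
  | trans a b c _ _ ih1 ih2 =>
    rcases ih1 with rfl | h1
    · exact ih2
    · rcases ih2 with rfl | h2
      · exact Or.inr h1
      · exact Or.inr (ehat_trans hf hg h1 h2)

end hfg

end EquivKAmalg

/-- The class of finite models of `Equiv⁰_k` has the amalgamation property:
given finite models `B`, `C` with a common substructure `A`, there is a finite
model `D` (the free amalgam) containing `B` and `C` as substructures over `A`. -/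
theorem equivK_amalgamation (k : ℕ) {A B C : Type u} [Finite A] [Finite B]
    [Finite C] (SA : EquivKStruct k A) (SB : EquivKStruct k B)
    (SC : EquivKStruct k C) (f : A → B) (g : A → C)
    (hf : EquivKEmbedding SA SB f) (hg : EquivKEmbedding SA SC g) :
    ∃ (D : Type u) (_ : Finite D) (SD : EquivKStruct k D) (f' : B → D)
      (g' : C → D), EquivKEmbedding SB SD f' ∧ EquivKEmbedding SC SD g' ∧
      f' ∘ f = g' ∘ g := by
  classical
  open EquivKAmalg in
  refine ⟨B ⊕ {c : C // c ∉ Set.range g}, inferInstance,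
    { E := fun x y => Function.Injective x ∧ Function.Injective y ∧
        Relation.EqvGen (Rgen SB SC f g) x y,
      symm := fun x y h => ⟨h.2.1, h.1, Relation.EqvGen.symm _ _ h.2.2⟩,
      trans := fun x y z h1 h2 =>
        ⟨h1.1, h2.2.1, Relation.EqvGen.trans _ _ _ h1.2.2 h2.2.2⟩,
      refl_iff := fun x =>
        ⟨fun h => h.1, fun hx => ⟨hx, hx, Relation.EqvGen.refl x⟩⟩,
      perm := fun x σ hx => ⟨hx, hx.comp σ.injective,
        Relation.EqvGen.rel _ _ (Or.inr (Or.inr ⟨hx, σ, rfl⟩))⟩ },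
    Sum.inl, gmap f g, ⟨Sum.inl_injective, ?_⟩,
    ⟨gmap_inj hf.1 hg.1, ?_⟩, ?_⟩
  · -- embedding of B
    intro x y
    constructor
    · rintro ⟨hx, hy, h⟩
      have hxi : Function.Injective x :=
        fun i j hij => hx (congrArg Sum.inl hij)
      rcases eqvGen_cases hf hg h with heq | hh
      · obtain rfl := comp_inl_inj heq
        exact (SB.refl_iff x).mpr hxi
      · rcases hh with h | h | ⟨m, h1, h2⟩ | ⟨m, h1, h2⟩ | ⟨hb, _, _, _, _⟩
        · exact ebr_inl h
        · exact ebr_inl (transferCB hf hg h ⟨x, rfl⟩ ⟨y, rfl⟩)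
        · have hm : EBr SB g m (Sum.inl ∘ y) :=
            transferCB hf hg h2 h1.pb_right ⟨y, rfl⟩
          exact ebr_inl (h1.trans hm)
        · have hm : EBr SB g (Sum.inl ∘ x) m :=
            transferCB hf hg h1 ⟨x, rfl⟩ h2.pb_left
          exact ebr_inl (hm.trans h2)
        · exact absurd ⟨x, rfl⟩ hb
    · intro hE
      have hxi := (SB.refl_iff x).mp (SB.trans _ _ _ hE (SB.symm _ _ hE))
      have hyi := (SB.refl_iff y).mp (SB.trans _ _ _ (SB.symm _ _ hE) hE)
      exact ⟨Sum.inl_injective.comp hxi, Sum.inl_injective.comp hyi,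
        Relation.EqvGen.rel _ _ (Or.inl ⟨x, y, hE, rfl, rfl⟩)⟩
  · -- embedding of C
    intro x y
    constructor
    · rintro ⟨hx, hy, h⟩
      have hxi : Function.Injective x :=
        fun i j hij => hx (congrArg (gmap f g) hij)
      rcases eqvGen_cases hf hg h with heq | hh
      · obtain rfl := comp_gmap_inj hf.1 hg.1 heq
        exact (SC.refl_iff x).mpr hxi
      · rcases hh with h | h | ⟨m, h1, h2⟩ | ⟨m, h1, h2⟩ | ⟨_, hc, _, _, _⟩
        · exact ecr_gmap hf hg (transferBC hf hg h ⟨x, rfl⟩ ⟨y, rfl⟩)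
        · exact ecr_gmap hf hg h
        · have hm : ECr SC f g (gmap f g ∘ x) m :=
            transferBC hf hg h1 ⟨x, rfl⟩ h2.pc_left
          exact ecr_gmap hf hg (hm.trans' hf hg h2)
        · have hm : ECr SC f g m (gmap f g ∘ y) :=
            transferBC hf hg h2 h1.pc_right ⟨y, rfl⟩
          exact ecr_gmap hf hg (h1.trans' hf hg hm)
        · exact absurd ⟨x, rfl⟩ hc
    · intro hE
      have hxi := (SC.refl_iff x).mp (SC.trans _ _ _ hE (SC.symm _ _ hE))
      have hyi := (SC.refl_iff y).mp (SC.trans _ _ _ (SC.symm _ _ hE) hE)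
      exact ⟨(gmap_inj hf.1 hg.1).comp hxi, (gmap_inj hf.1 hg.1).comp hyi,
        Relation.EqvGen.rel _ _ (Or.inr (Or.inl ⟨x, y, hE, rfl, rfl⟩))⟩
  · exact funext fun a => (gmap_g hg.1 a).symm
end
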